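/- arXiv:2109.03703 — 4 statements merged into one kernel-verified Lean document; each statement's English description precedes it below -/
import Mathlib

section
/- For all integers d ≥ q ≥ 2 and integer vectors r = (r_1,…,r_d), n = (n_1,…,n_d) with 1 ≤ r_i ≤ n_i for all i, the directed weak saturation number of K^q_r in K^q_n equals Σ_{I ∈ binom([d],q)} Π_{i∈I} n_i − Σ_{I ∈ binom([d],≤q)} Π_{i∈I} (n_i − r_i), where binom([d],≤q) denotes the collection of all subsets of [d] of size at most q and the empty product is 1. -/
set_option linter.unusedSectionVars false
set_option synthInstance.maxHeartbeats 1000000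
set_option maxHeartbeats 1000000


open Finset

/-- The set of vertices in class `i` of the partition of the vertex set given by `part`. -/
def classOf {α : Type*} [Fintype α] [DecidableEq α] {d : ℕ} (part : α → Fin d) (i : Fin d) :
    Finset α :=
  Finset.univ.filter fun v => part v = i

/-- The complete `d`-partite `q`-graph `K^q_n` on the vertex set partitioned by `part`:
its edges are the `q`-subsets meeting each class in at most one vertex. -/
def mEdges {α : Type*} [Fintype α] [DecidableEq α] {d : ℕ} (part : α → Fin d) (q : ℕ) :
    Finset (Finset α) :=
  (Finset.univ.powersetCard q).filter fun e => ∀ i : Fin d, (e.filter fun v => part v = i).card ≤ 1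

/-- The induced subgraph `K^q_n[R]` of the complete multipartite `q`-graph on `R`. -/
def indEdges {α : Type*} [Fintype α] [DecidableEq α] {d : ℕ} (part : α → Fin d) (q : ℕ)
    (R : Finset α) : Finset (Finset α) :=
  (mEdges part q).filter fun e => e ⊆ R

/-- `G` contains a directed copy of `K^q_r` (pointing the same way as the partition,
i.e. with exactly `r i` vertices in class `i`) which contains the edge `e`. -/
def DirCopyAt {α : Type*} [Fintype α] [DecidableEq α] {d : ℕ} (part : α → Fin d) (q : ℕ)
    (r : Fin d → ℕ) (G : Finset (Finset α)) (e : Finset α) : Prop :=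
  ∃ R : Finset α, (∀ i : Fin d, (R.filter fun v => part v = i).card = r i) ∧
    e ∈ indEdges part q R ∧ indEdges part q R ⊆ G

/-- `G` is directed weakly `K^q_r`-saturated in the complete multipartite `q`-graph:
the missing edges can be ordered so that each of them, when added, lies in a new
directed copy of `K^q_r`. -/
def DirWeaklySat {α : Type*} [Fintype α] [DecidableEq α] {d : ℕ} (part : α → Fin d) (q : ℕ)
    (r : Fin d → ℕ) (G : Finset (Finset α)) : Prop :=
  G ⊆ mEdges part q ∧ ∃ L : List (Finset α), L.Nodup ∧ L.toFinset = mEdges part q \ G ∧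
    ∀ i : Fin L.length, DirCopyAt part q r (G ∪ (L.take (i.1 + 1)).toFinset) (L.get i)

/-- The directed weak saturation number `mwsat(K^q_n, K^q_r)`. -/
noncomputable def mwsat {α : Type*} [Fintype α] [DecidableEq α] {d : ℕ} (part : α → Fin d)
    (q : ℕ) (r : Fin d → ℕ) : ℕ :=
  sInf {m | ∃ G, DirWeaklySat part q r G ∧ G.card = m}

namespace MW

variable {α : Type*} [Fintype α] [DecidableEq α] {d q : ℕ} {part : α → Fin d}

lemma mem_mEdges {e : Finset α} :
    e ∈ mEdges part q ↔ e.card = q ∧ ∀ i, (e.filter fun v => part v = i).card ≤ 1 := by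
  simp [mEdges, Finset.mem_powersetCard, Finset.subset_univ]

lemma part_injOn {e : Finset α} (he : e ∈ mEdges part q)
    {v w : α} (hv : v ∈ e) (hw : w ∈ e) (hvw : part v = part w) : v = w :=
  Finset.card_le_one.1 ((mem_mEdges.1 he).2 (part w)) v (mem_filter.2 ⟨hv, hvw⟩) w
    (mem_filter.2 ⟨hw, rfl⟩)

lemma mem_mEdges_of {e : Finset α} (hcard : e.card = q)
    (hinj : ∀ v ∈ e, ∀ w ∈ e, part v = part w → v = w) : e ∈ mEdges part q :=
  mem_mEdges.2 ⟨hcard, fun i => Finset.card_le_one.2 (fun v hv w hw => by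
    simp only [mem_filter] at hv hw
    exact hinj v hv.1 w hw.1 (hv.2.trans hw.2.symm))⟩

lemma image_part_card {e : Finset α} (he : e ∈ mEdges part q) : (e.image part).card = q := by
  rw [Finset.card_image_of_injOn fun v hv w hw h => part_injOn he hv hw h]
  exact (mem_mEdges.1 he).1

/-! ### transversal patterns -/

abbrev Pat (d : ℕ) (α : Type*) := Σ J : Finset (Fin d), ∀ j ∈ J, α

def medge (p : Pat d α) : Finset α := p.1.attach.image fun j => p.2 j.1 j.2

def PatOK (part : α → Fin d) (p : Pat d α) : Prop := ∀ j (hj : j ∈ p.1), part (p.2 j hj) = j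

lemma mem_medge {p : Pat d α} {v : α} :
    v ∈ medge p ↔ ∃ (j : Fin d) (hj : j ∈ p.1), p.2 j hj = v := by
  simp only [medge, Finset.mem_image, Finset.mem_attach, true_and]
  constructor
  · rintro ⟨⟨j, hj⟩, h⟩; exact ⟨j, hj, h⟩
  · rintro ⟨j, hj, h⟩; exact ⟨⟨j, hj⟩, h⟩

lemma val_mem_medge {p : Pat d α} {j : Fin d} (hj : j ∈ p.1) : p.2 j hj ∈ medge p :=
  mem_medge.2 ⟨j, hj, rfl⟩

lemma part_injOn_medge {p : Pat d α} (hp : PatOK part p) {v w : α}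
    (hv : v ∈ medge p) (hw : w ∈ medge p) (hvw : part v = part w) : v = w := by
  obtain ⟨j, hj, rfl⟩ := mem_medge.1 hv
  obtain ⟨j', hj', rfl⟩ := mem_medge.1 hw
  have hjj : j = j' := by rw [← hp j hj, ← hp j' hj', hvw]
  subst hjj; rfl

lemma image_part_medge {p : Pat d α} (hp : PatOK part p) : (medge p).image part = p.1 := by
  ext j
  simp only [Finset.mem_image]
  constructor
  · rintro ⟨v, hv, rfl⟩
    obtain ⟨j, hj, rfl⟩ := mem_medge.1 hv
    rw [hp j hj]; exact hj
  · intro hj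
    exact ⟨p.2 j hj, val_mem_medge hj, hp j hj⟩

lemma medge_card {p : Pat d α} (hp : PatOK part p) : (medge p).card = p.1.card := by
  rw [medge, Finset.card_image_of_injOn, Finset.card_attach]
  rintro ⟨j, hj⟩ - ⟨j', hj'⟩ - h
  have h' : p.2 j hj = p.2 j' hj' := h
  have hjj : j = j' := by rw [← hp j hj, ← hp j' hj', h']
  exact Subtype.ext hjj

lemma medge_inj_on {p p' : Pat d α} (hp : PatOK part p) (hp' : PatOK part p')
    (h : medge p = medge p') : p = p' := by
  obtain ⟨J, f⟩ := p
  obtain ⟨J', f'⟩ := p'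
  have a := image_part_medge (part := part) hp
  have b := image_part_medge (part := part) hp'
  rw [h] at a
  have hJ : J = J' := a.symm.trans b
  subst hJ
  have hf : f = f' := by
    funext j hj
    have h1 : f j hj ∈ medge ⟨J, f'⟩ := h ▸ val_mem_medge (p := ⟨J, f⟩) hj
    obtain ⟨j', hj', hv⟩ := mem_medge.1 h1
    have hjj : j' = j := by
      have h2 := hp' j' hj'
      rw [hv] at h2
      rw [← h2, hp j hj]
    subst hjj
    exact hv.symm
  rw [hf]

lemma medge_mem_mEdges {p : Pat d α} (hp : PatOK part p) (hcard : p.1.card = q) :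
    medge p ∈ mEdges part q :=
  mem_mEdges_of (by rw [medge_card hp, hcard])
    (fun v hv w hw hvw => part_injOn_medge hp hv hw hvw)

lemma filter_medge_of_mem {p : Pat d α} (hp : PatOK part p) {j : Fin d} (hj : j ∈ p.1) :
    (medge p).filter (fun v => part v = j) = {p.2 j hj} := by
  ext v
  simp only [mem_filter, Finset.mem_singleton]
  constructor
  · rintro ⟨hv, rfl⟩
    exact part_injOn_medge hp hv (val_mem_medge hj) (hp _ hj).symm
  · rintro rfl
    exact ⟨val_mem_medge hj, hp j hj⟩

lemma filter_medge_of_not_mem {p : Pat d α} (hp : PatOK part p) {j : Fin d} (hj : j ∉ p.1) :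
    (medge p).filter (fun v => part v = j) = ∅ := by
  rw [Finset.filter_eq_empty_iff]
  intro v hv
  intro h
  apply hj
  rw [← h, ← image_part_medge (part := part) hp]
  exact Finset.mem_image_of_mem part hv

/-! ### counting mEdges -/

def msig (part : α → Fin d) (q : ℕ) : Finset (Pat d α) :=
  (Finset.univ.powersetCard q).sigma fun I => I.pi fun i => classOf part i

lemma mem_classOf {v : α} {i : Fin d} : v ∈ classOf part i ↔ part v = i := by
  simp [classOf]

lemma patOK_of_msig {p : Pat d α} (hp : p ∈ msig part q) : PatOK part p := by
  rw [msig, Finset.mem_sigma] at hp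
  intro j hj
  exact mem_classOf.1 (Finset.mem_pi.1 hp.2 j hj)

lemma card_of_msig {p : Pat d α} (hp : p ∈ msig part q) : p.1.card = q := by
  rw [msig, Finset.mem_sigma, Finset.mem_powersetCard] at hp
  exact hp.1.2

lemma mEdges_eq_image : mEdges part q = (msig part q).image medge := by
  ext e
  simp only [Finset.mem_image]
  constructor
  · intro he
    refine ⟨⟨e.image part, fun j hj => (Finset.mem_image.1 hj).choose⟩, ?_, ?_⟩
    · rw [msig, Finset.mem_sigma]
      constructor
      · rw [Finset.mem_powersetCard]
        exact ⟨Finset.subset_univ _, image_part_card he⟩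
      · rw [Finset.mem_pi]
        intro j hj
        have hs := (Finset.mem_image.1 hj).choose_spec
        exact mem_classOf.2 hs.2
    · have hOK : PatOK part ⟨e.image part, fun j hj => (Finset.mem_image.1 hj).choose⟩ :=
        fun j hj => (Finset.mem_image.1 hj).choose_spec.2
      apply Finset.eq_of_subset_of_card_le
      · intro v hv
        obtain ⟨j, hj, rfl⟩ := mem_medge.1 hv
        exact (Finset.mem_image.1 hj).choose_spec.1
      · rw [medge_card hOK, image_part_card he, (mem_mEdges.1 he).1]
  · rintro ⟨p, hp, rfl⟩
    exact medge_mem_mEdges (patOK_of_msig hp) (card_of_msig hp)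

lemma card_mEdges :
    (mEdges part q).card = ∑ I ∈ Finset.univ.powersetCard q, ∏ i ∈ I, (classOf part i).card := by
  rw [mEdges_eq_image, Finset.card_image_of_injOn
    (fun p hp p' hp' h => medge_inj_on (patOK_of_msig hp) (patOK_of_msig hp') h)]
  rw [msig, Finset.card_sigma]
  exact Finset.sum_congr rfl fun I _ => Finset.card_pi I _

/-! ### the construction -/

section Upper

variable (part : α → Fin d) (S : Fin d → Finset α) (s0 : Fin d → α)

def tl (i : Fin d) : Finset α := classOf part i \ S i

def pats (q : ℕ) : Finset (Pat d α) :=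
  ((Finset.univ : Finset (Fin d)).powerset.filter fun J => J.card ≤ q).sigma
    fun J => J.pi fun j => tl part S j

noncomputable def Cex (q : ℕ) (J : Finset (Fin d)) : Finset (Fin d) :=
  if h : q - J.card ≤ (Jᶜ : Finset (Fin d)).card then (Finset.exists_subset_card_eq h).choose
  else ∅

noncomputable def epat (q : ℕ) (p : Pat d α) : Pat d α :=
  ⟨p.1 ∪ Cex q p.1, fun j hj => if h : j ∈ p.1 then p.2 j h else s0 j⟩

noncomputable def cedge (q : ℕ) (p : Pat d α) : Finset α := medge (epat s0 q p)

def tailOf (e : Finset α) : Finset α := e.filter fun v => v ∈ tl part S (part v)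

noncomputable def Dset (q : ℕ) : Finset (Finset α) := (pats part S q).image (cedge s0 q)

noncomputable def Gstar (q : ℕ) : Finset (Finset α) := mEdges part q \ Dset part S s0 q

def copyR' (S : Fin d → Finset α) (s0 : Fin d → α) (p : Pat d α) : Finset α :=
  medge p ∪ ((Finset.univ.biUnion S) \ p.1.image s0)

variable {part S s0}

lemma Cex_subset {q : ℕ} {J : Finset (Fin d)} : Cex q J ⊆ Jᶜ := by
  unfold Cex; split_ifs with h
  · exact (Finset.exists_subset_card_eq h).choose_spec.1
  · exact Finset.empty_subset _

lemma Cex_card (hdq : q ≤ d) {J : Finset (Fin d)} (hJ : J.card ≤ q) :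
    (Cex q J).card = q - J.card := by
  have h : q - J.card ≤ (Jᶜ : Finset (Fin d)).card := by
    rw [Finset.card_compl, Fintype.card_fin]
    exact Nat.sub_le_sub_right hdq _
  rw [Cex, dif_pos h]
  exact (Finset.exists_subset_card_eq h).choose_spec.2

lemma mem_tl {v : α} {i : Fin d} : v ∈ tl part S i ↔ part v = i ∧ v ∉ S i := by
  simp [tl, mem_classOf, Finset.mem_sdiff]

lemma mem_pats {q : ℕ} {p : Pat d α} :
    p ∈ pats part S q ↔ p.1.card ≤ q ∧ ∀ j (hj : j ∈ p.1), p.2 j hj ∈ tl part S j := by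
  simp [pats, Finset.mem_sigma, Finset.mem_pi, Finset.mem_filter, Finset.mem_powerset,
    Finset.subset_univ]

lemma medge_subset_cedge {q : ℕ} {p : Pat d α} : medge p ⊆ cedge s0 q p := by
  intro v hv
  obtain ⟨j, hj, rfl⟩ := mem_medge.1 hv
  apply mem_medge.2
  refine ⟨j, Finset.mem_union_left _ hj, ?_⟩
  simp only [epat, dif_pos hj]

lemma mem_cedge_elim {q : ℕ} {p : Pat d α} {v : α} (hv : v ∈ cedge s0 q p) :
    v ∈ medge p ∨ ∃ j ∈ Cex q p.1, j ∉ p.1 ∧ v = s0 j := by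
  obtain ⟨j, hj, rfl⟩ := mem_medge.1 hv
  by_cases h : j ∈ p.1
  · left
    have : (epat s0 q p).2 j hj = p.2 j h := by simp only [epat, dif_pos h]
    rw [this]; exact val_mem_medge h
  · right
    refine ⟨j, ?_, h, ?_⟩
    · rcases Finset.mem_union.1 hj with h' | h'
      · exact absurd h' h
      · exact h'
    · simp only [epat, dif_neg h]

section hyps
variable (hS : ∀ i, S i ⊆ classOf part i) (hs0 : ∀ i, s0 i ∈ S i)

include hS hs0

lemma part_s0 (i : Fin d) : part (s0 i) = i := mem_classOf.1 (hS i (hs0 i))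

lemma patOK_of_pats {q : ℕ} {p : Pat d α} (hp : p ∈ pats part S q) : PatOK part p := by
  intro j hj
  exact (mem_tl.1 ((mem_pats.1 hp).2 j hj)).1

lemma patOK_epat {q : ℕ} {p : Pat d α} (hp : p ∈ pats part S q) :
    PatOK part (epat s0 q p) := by
  intro j hj
  simp only [epat]
  split_ifs with h
  · exact patOK_of_pats hS hs0 hp j h
  · exact part_s0 hS hs0 j

lemma epat_card (hdq : q ≤ d) {p : Pat d α} (hp : p ∈ pats part S q) :
    (epat s0 q p).1.card = q := by
  have hdis : Disjoint p.1 (Cex q p.1) :=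
    Finset.disjoint_left.2 fun j hj hj' => by
      have := Cex_subset hj'
      simp only [Finset.mem_compl] at this
      exact this hj
  have : (epat s0 q p).1 = p.1 ∪ Cex q p.1 := rfl
  rw [this, Finset.card_union_of_disjoint hdis, Cex_card hdq (mem_pats.1 hp).1]
  exact Nat.add_sub_cancel' (mem_pats.1 hp).1

lemma cedge_mem (hdq : q ≤ d) {p : Pat d α} (hp : p ∈ pats part S q) :
    cedge s0 q p ∈ mEdges part q :=
  medge_mem_mEdges (patOK_epat hS hs0 hp) (epat_card hS hs0 hdq hp)

lemma tailOf_cedge (hdq : q ≤ d) {p : Pat d α} (hp : p ∈ pats part S q) :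
    tailOf part S (cedge s0 q p) = medge p := by
  ext v
  simp only [tailOf, mem_filter]
  constructor
  · rintro ⟨hv, htl⟩
    rcases mem_cedge_elim hv with h | ⟨j, hjc, hjn, rfl⟩
    · exact h
    · exfalso
      have hpv : part (s0 j) = j := part_s0 hS hs0 j
      rw [hpv] at htl
      exact (mem_tl.1 htl).2 (hs0 j)
  · intro hv
    refine ⟨medge_subset_cedge hv, ?_⟩
    obtain ⟨j, hj, rfl⟩ := mem_medge.1 hv
    have := (mem_pats.1 hp).2 j hj
    rwa [patOK_of_pats hS hs0 hp j hj]

lemma cedge_injOn (hdq : q ≤ d) {p p' : Pat d α} (hp : p ∈ pats part S q)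
    (hp' : p' ∈ pats part S q) (h : cedge s0 q p = cedge s0 q p') : p = p' := by
  apply medge_inj_on (patOK_of_pats hS hs0 hp) (patOK_of_pats hS hs0 hp')
  rw [← tailOf_cedge hS hs0 hdq hp, ← tailOf_cedge hS hs0 hdq hp', h]

lemma card_Dset (hdq : q ≤ d) :
    (Dset part S s0 q).card
      = ∑ J ∈ (Finset.univ : Finset (Fin d)).powerset.filter (fun J => J.card ≤ q),
          ∏ j ∈ J, (tl part S j).card := by
  rw [Dset, Finset.card_image_of_injOn
    (fun p hp p' hp' h => cedge_injOn hS hs0 hdq hp hp' h)]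
  rw [pats, Finset.card_sigma]
  exact Finset.sum_congr rfl fun J _ => Finset.card_pi J _

lemma tail_subset_of_subset_copyR {p : Pat d α} {x : Finset α} (hx : x ⊆ copyR' S s0 p) :
    tailOf part S x ⊆ medge p := by
  intro v hv
  simp only [tailOf, mem_filter] at hv
  rcases Finset.mem_union.1 (hx hv.1) with h | h
  · exact h
  · exfalso
    obtain ⟨hbi, -⟩ := Finset.mem_sdiff.1 h
    obtain ⟨j, -, hvj⟩ := Finset.mem_biUnion.1 hbi
    have hpv : part v = j := mem_classOf.1 (hS j hvj)
    have := mem_tl.1 hv.2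
    rw [hpv] at this
    exact this.2 hvj

lemma cedge_subset_copyR {q : ℕ} {p : Pat d α} : cedge s0 q p ⊆ copyR' S s0 p := by
  intro v hv
  rcases mem_cedge_elim hv with h | ⟨j, hjc, hjn, rfl⟩
  · exact Finset.mem_union_left _ h
  · apply Finset.mem_union_right
    rw [Finset.mem_sdiff]
    constructor
    · exact Finset.mem_biUnion.2 ⟨j, Finset.mem_univ _, hs0 j⟩
    · intro hmem
      obtain ⟨j', hj', h'⟩ := Finset.mem_image.1 hmem
      apply hjn
      have : j' = j := by
        rw [← part_s0 hS hs0 j', h', part_s0 hS hs0 j]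
      rwa [← this]

lemma filter_copyR {p : Pat d α} (hp : p ∈ pats part S q) (i : Fin d) :
    ((copyR' S s0 p).filter (fun v => part v = i)).card = (S i).card := by
  rw [copyR', Finset.filter_union]
  have hOK := patOK_of_pats hS hs0 hp
  have hpart2 : ((Finset.univ.biUnion S \ p.1.image s0).filter (fun v => part v = i))
      = if i ∈ p.1 then (S i).erase (s0 i) else S i := by
    ext v
    simp only [mem_filter, Finset.mem_sdiff, Finset.mem_biUnion, Finset.mem_image]
    constructor
    · rintro ⟨⟨⟨j, -, hvj⟩, hni⟩, hpv⟩
      have : j = i := by rw [← mem_classOf.1 (hS j hvj), hpv]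
      subst this
      split_ifs with h
      · refine Finset.mem_erase.2 ⟨?_, hvj⟩
        intro he
        exact hni ⟨j, h, he.symm⟩
      · exact hvj
    · intro hv
      split_ifs at hv with h
      · obtain ⟨hne, hvS⟩ := Finset.mem_erase.1 hv
        have hpv : part v = i := mem_classOf.1 (hS i hvS)
        refine ⟨⟨⟨i, Finset.mem_univ _, hvS⟩, ?_⟩, hpv⟩
        rintro ⟨j, hj, rfl⟩
        have : j = i := by rw [← part_s0 hS hs0 j, hpv]
        subst this
        exact hne rfl
      · have hpv : part v = i := mem_classOf.1 (hS i hv)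
        refine ⟨⟨⟨i, Finset.mem_univ _, hv⟩, ?_⟩, hpv⟩
        rintro ⟨j, hj, rfl⟩
        have : j = i := by rw [← part_s0 hS hs0 j, hpv]
        subst this
        exact h hj
  rw [hpart2]
  by_cases h : i ∈ p.1
  · rw [filter_medge_of_mem hOK h, if_pos h]
    have hdisj : Disjoint ({p.2 i h} : Finset α) ((S i).erase (s0 i)) := by
      rw [Finset.disjoint_singleton_left]
      intro hmem
      have := (mem_tl.1 ((mem_pats.1 hp).2 i h)).2
      exact this (Finset.mem_of_mem_erase hmem)
    rw [Finset.card_union_of_disjoint hdisj, Finset.card_singleton,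
      Finset.card_erase_of_mem (hs0 i)]
    have : 1 ≤ (S i).card := Finset.card_pos.2 ⟨s0 i, hs0 i⟩
    omega
  · rw [filter_medge_of_not_mem hOK h, if_neg h, Finset.empty_union]

end hyps
end Upper
/-! ### saturation -/

lemma get_mem_take {β : Type*} (l : List β) (i : Fin l.length) {k : ℕ} (h : i.1 < k) :
    l.get i ∈ l.take k := by
  have hlen : i.1 < (l.take k).length := by
    rw [List.length_take]; exact lt_min h i.2
  have : (l.take k).get ⟨i.1, hlen⟩ = l.get i := by
    simp [List.getElem_take]
  rw [← this]
  exact List.get_mem _ _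

section Sat

variable {part : α → Fin d} {S : Fin d → Finset α} {s0 : Fin d → α} {r : Fin d → ℕ}

variable (hS : ∀ i, S i ⊆ classOf part i) (hs0 : ∀ i, s0 i ∈ S i)
  (hScard : ∀ i, (S i).card = r i) (hdq : q ≤ d)

include hS hs0 hdq

lemma Dset_subset_mEdges : Dset part S s0 q ⊆ mEdges part q := by
  intro x hx
  obtain ⟨p, hp, rfl⟩ := Finset.mem_image.1 hx
  exact cedge_mem hS hs0 hdq hp

include hScard

lemma gstar_sat : DirWeaklySat part q r (Gstar part S s0 q) := by
  classical
  refine ⟨Finset.sdiff_subset, ?_⟩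
  set keyf : Finset α → ℕ := fun e => (tailOf part S e).card with hkeyf
  set L : List (Finset α) :=
    (Dset part S s0 q).toList.mergeSort (fun a b => decide (keyf a ≤ keyf b)) with hL
  have hperm : L.Perm (Dset part S s0 q).toList := List.mergeSort_perm _ _
  have hnodup : L.Nodup := hperm.symm.nodup (Finset.nodup_toList _)
  have htofin : L.toFinset = Dset part S s0 q := by
    ext x
    rw [List.mem_toFinset, hperm.mem_iff, Finset.mem_toList]
  have hsorted : List.Pairwise (fun a b => decide (keyf a ≤ keyf b) = true) L := by
    apply List.pairwise_mergeSort
    · intro a b c hab hbc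
      simp only [decide_eq_true_eq] at *
      omega
    · intro a b
      simp only [Bool.or_eq_true, decide_eq_true_eq]
      omega
  have hmissing : mEdges part q \ Gstar part S s0 q = Dset part S s0 q := by
    rw [Gstar, Finset.sdiff_sdiff_self_left]
    exact Finset.inter_eq_right.2 (Dset_subset_mEdges hS hs0 hdq)
  refine ⟨L, hnodup, by rw [htofin, hmissing], ?_⟩
  intro i
  have hgi : L.get i ∈ Dset part S s0 q := by
    rw [← htofin]
    exact List.mem_toFinset.2 (List.get_mem _ _)
  obtain ⟨p, hp, hpe⟩ := Finset.mem_image.1 hgi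
  refine ⟨copyR' S s0 p, fun j => by rw [filter_copyR hS hs0 hp j]; exact hScard j, ?_, ?_⟩
  · rw [indEdges, Finset.mem_filter, ← hpe]
    exact ⟨cedge_mem hS hs0 hdq hp, cedge_subset_copyR hS hs0⟩
  · intro x hx
    rw [indEdges, Finset.mem_filter] at hx
    obtain ⟨hxm, hxsub⟩ := hx
    by_cases hxd : x ∈ Dset part S s0 q
    swap
    · exact Finset.mem_union_left _ (Finset.mem_sdiff.2 ⟨hxm, hxd⟩)
    apply Finset.mem_union_right
    obtain ⟨p'', hp'', hpe''⟩ := Finset.mem_image.1 hxd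
    have hsub2 : medge p'' ⊆ medge p := by
      rw [← tailOf_cedge hS hs0 hdq hp'', hpe'']
      exact tail_subset_of_subset_copyR hS hs0 hxsub
    rw [List.mem_toFinset]
    by_cases heq : medge p'' = medge p
    · have hpp : p'' = p :=
        medge_inj_on (patOK_of_pats hS hs0 hp'') (patOK_of_pats hS hs0 hp) heq
      have : x = L.get i := by rw [← hpe'', hpp, hpe]
      rw [this]
      exact get_mem_take L i (Nat.lt_succ_self _)
    · have hlt : keyf x < keyf (L.get i) := by
        have h1 : tailOf part S x = medge p'' := by
          rw [← hpe'']; exact tailOf_cedge hS hs0 hdq hp''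
        have h2 : tailOf part S (L.get i) = medge p := by
          rw [← hpe]; exact tailOf_cedge hS hs0 hdq hp
        rw [hkeyf]
        simp only [h1, h2]
        exact Finset.card_lt_card (Finset.ssubset_iff_subset_ne.2 ⟨hsub2, heq⟩)
      have hxl : x ∈ L := by rw [← List.mem_toFinset, htofin]; exact hxd
      obtain ⟨j, hj⟩ := List.mem_iff_get.1 hxl
      have hji : j.1 < i.1 := by
        rcases lt_trichotomy j.1 i.1 with h | h | h
        · exact h
        · exfalso
          have : x = L.get i := by rw [← hj]; congr 1; exact Fin.ext h
          rw [this] at hlt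
          exact lt_irrefl _ hlt
        · exfalso
          have := List.pairwise_iff_get.1 hsorted i j (by exact h)
          rw [hj] at this
          simp only [decide_eq_true_eq] at this
          omega
      rw [← hj]
      exact get_mem_take L j (by omega)

lemma card_Gstar :
    (Gstar part S s0 q).card = (mEdges part q).card - (Dset part S s0 q).card :=
  Finset.card_sdiff_of_subset (Dset_subset_mEdges hS hs0 hdq)

end Sat
/-! ### lower bound: Lagrange weights -/

section Lower

variable (part : α → Fin d) (r : Fin d → ℕ)

noncomputable def tt (α : Type*) [Fintype α] [DecidableEq α] : α → ℚ :=
  fun v => ((Fintype.equivFin α v : ℕ) : ℚ) + 1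

lemma tt_inj : Function.Injective (tt α) := by
  intro v w h
  have : ((Fintype.equivFin α v : ℕ) : ℚ) = ((Fintype.equivFin α w : ℕ) : ℚ) := by
    simpa [tt] using h
  have := Nat.cast_injective this
  exact (Fintype.equivFin α).injective (Fin.ext this)

lemma tt_ne_zero (v : α) : tt α v ≠ 0 := by
  have : (0:ℚ) ≤ ((Fintype.equivFin α v : ℕ) : ℚ) := Nat.cast_nonneg _
  simp only [tt]
  intro h
  nlinarith

noncomputable def zfun (R : Finset α) (v : α) : ℚ :=
  if v ∈ R then (Lagrange.basis R (tt α) v).eval 0 else 0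

lemma zfun_eq_zero {R : Finset α} {v : α} (hv : v ∉ R) : zfun R v = 0 := if_neg hv

lemma zfun_ne_zero {R : Finset α} {v : α} (hv : v ∈ R) : zfun R v ≠ 0 := by
  rw [zfun, if_pos hv, Lagrange.basis, Polynomial.eval_prod]
  apply Finset.prod_ne_zero_iff.2
  intro j hj
  have hjv : j ≠ v := Finset.ne_of_mem_erase hj
  rw [Lagrange.basisDivisor, Polynomial.eval_mul, Polynomial.eval_C, Polynomial.eval_sub,
    Polynomial.eval_X, Polynomial.eval_C]
  apply mul_ne_zero
  · exact inv_ne_zero (sub_ne_zero.2 fun h => hjv (tt_inj h).symm)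
  · simpa using tt_ne_zero j

lemma zfun_moment {R : Finset α} {k : ℕ} (hk : k < R.card) :
    ∑ v ∈ R, tt α v ^ k * zfun R v = (0:ℚ) ^ k := by
  have hinj : Set.InjOn (tt α) (R : Set α) := fun a _ b _ h => tt_inj h
  have hdeg : ((Polynomial.X : Polynomial ℚ) ^ k).degree < R.card := by
    rw [Polynomial.degree_X_pow]
    exact_mod_cast hk
  have heq := Lagrange.eq_interpolate hinj hdeg
  have := congrArg (Polynomial.eval 0) heq
  rw [Lagrange.interpolate_apply, Polynomial.eval_finset_sum] at this
  simp only [Polynomial.eval_mul, Polynomial.eval_C, Polynomial.eval_pow,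
    Polynomial.eval_X] at this
  rw [this]
  apply Finset.sum_congr rfl
  intro v hv
  rw [zfun, if_pos hv]

/-! ### the difference space -/

noncomputable def momMap (i : Fin d) : (α → ℚ) →ₗ[ℚ] (Fin (r i) → ℚ) where
  toFun x := fun k => ∑ v ∈ classOf part i, x v * tt α v ^ (k : ℕ)
  map_add' x y := by
    funext k
    simp [add_mul, Finset.sum_add_distrib]
  map_smul' c x := by
    funext k
    simp [Finset.mul_sum, mul_assoc]

noncomputable def suppSub (i : Fin d) : Submodule ℚ (α → ℚ) :=
  Submodule.span ℚ (((classOf part i).image (fun v => (Pi.single v (1:ℚ) : α → ℚ))) : Set (α → ℚ))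

lemma mem_suppSub_of {i : Fin d} {x : α → ℚ} (hx : ∀ v, v ∉ classOf part i → x v = 0) :
    x ∈ suppSub part i := by
  have hxe : x = ∑ v ∈ classOf part i, x v • (Pi.single v (1:ℚ) : α → ℚ) := by
    funext w
    rw [Finset.sum_apply]
    by_cases hw : w ∈ classOf part i
    · rw [Finset.sum_eq_single w]
      · simp
      · intro v hv hvw
        simp [Pi.single_apply, hvw]
      · intro h; exact absurd hw h
    · rw [hx w hw]
      apply (Finset.sum_eq_zero _).symm
      intro v hv
      have : v ≠ w := fun h => hw (h ▸ hv)
      simp [Pi.single_apply, this]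
  rw [hxe]
  apply Submodule.sum_mem
  intro v hv
  apply Submodule.smul_mem
  apply Submodule.subset_span
  exact Finset.mem_image_of_mem _ hv

lemma finrank_suppSub (i : Fin d) :
    Module.finrank ℚ (suppSub part i) = (classOf part i).card := by
  classical
  have hli : LinearIndependent ℚ
      (fun v : ↥(classOf part i) => (Pi.single (v : α) (1:ℚ) : α → ℚ)) := by
    have h2 := (Pi.basisFun ℚ α).linearIndependent
    have h3 := h2.comp (Subtype.val : ↥(classOf part i) → α) Subtype.val_injective
    convert h3 using 1
    funext v
    rw [Function.comp_apply, Pi.basisFun_apply]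
  have hrange : Set.range (fun v : ↥(classOf part i) => (Pi.single (v : α) (1:ℚ) : α → ℚ))
      = (((classOf part i).image (fun v => (Pi.single v (1:ℚ) : α → ℚ))) : Set (α → ℚ)) := by
    ext y
    simp only [Set.mem_range, Finset.coe_image, Set.mem_image, Finset.mem_coe]
    constructor
    · rintro ⟨⟨v, hv⟩, rfl⟩; exact ⟨v, hv, rfl⟩
    · rintro ⟨v, hv, rfl⟩; exact ⟨⟨v, hv⟩, rfl⟩
  rw [suppSub, ← hrange, finrank_span_eq_card hli, Fintype.card_coe]

end Lower
section Lower2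

variable {part : α → Fin d} {r : Fin d → ℕ} {S : Fin d → Finset α}

lemma momMap_single {i : Fin d} {w : α} (hw : w ∈ classOf part i) (k : Fin (r i)) :
    momMap part r i (Pi.single w (1:ℚ) : α → ℚ) k = tt α w ^ (k : ℕ) := by
  simp only [momMap, LinearMap.coe_mk, AddHom.coe_mk]
  rw [Finset.sum_eq_single w]
  · simp
  · intro v hv hvw
    simp [Pi.single_apply, hvw]
  · intro h; exact absurd hw h

lemma momMap_surj {i : Fin d} (hS : S i ⊆ classOf part i) (hScard : (S i).card = r i)
    (y : Fin (r i) → ℚ) : ∃ x, x ∈ suppSub part i ∧ momMap part r i x = y := by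
  classical
  let e := (Finset.equivFinOfCardEq hScard).symm
  set vv : Fin (r i) → ℚ := fun l => tt α ↑(e l) with hvv
  have hvvinj : Function.Injective vv := by
    intro a b h
    exact e.injective (Subtype.ext (tt_inj h))
  set A : Matrix (Fin (r i)) (Fin (r i)) ℚ := Matrix.of (fun k l => vv l ^ (k : ℕ)) with hA
  have hAT : A = (Matrix.vandermonde vv).transpose := by
    ext k l
    simp [hA, Matrix.vandermonde, Matrix.transpose_apply]
  have hdet : IsUnit A.det := by
    rw [hAT, Matrix.det_transpose, Matrix.det_vandermonde, isUnit_iff_ne_zero]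
    apply Finset.prod_ne_zero_iff.2
    intro a _
    apply Finset.prod_ne_zero_iff.2
    intro b hb
    exact sub_ne_zero.2 fun h => (Finset.mem_Ioi.1 hb).ne' (hvvinj h)
  set c : Fin (r i) → ℚ := (A⁻¹).mulVec y with hc
  have hAc : A.mulVec c = y := by
    rw [hc, Matrix.mulVec_mulVec, Matrix.mul_nonsing_inv _ hdet, Matrix.one_mulVec]
  refine ⟨∑ l : Fin (r i), c l • (Pi.single (↑(e l) : α) (1:ℚ) : α → ℚ), ?_, ?_⟩
  · apply Submodule.sum_mem
    intro l _
    apply Submodule.smul_mem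
    exact Submodule.subset_span (Finset.mem_image_of_mem _ (hS (e l).2))
  · rw [map_sum]
    funext k
    rw [Finset.sum_apply]
    have : ∀ l : Fin (r i), (momMap part r i (c l • (Pi.single (↑(e l) : α) (1:ℚ) : α → ℚ))) k
        = c l * vv l ^ (k : ℕ) := by
      intro l
      rw [map_smul]
      have := momMap_single (part := part) (r := r) (hS (e l).2) k
      simp only [Pi.smul_apply, this, smul_eq_mul, hvv]
    rw [Finset.sum_congr rfl fun l _ => this l]
    rw [← hAc]
    rw [Matrix.mulVec]
    simp only [dotProduct, hA, Matrix.of_apply]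
    apply Finset.sum_congr rfl
    intro l _
    ring

lemma momMap_zfun {i : Fin d} {R : Finset α} (hRsub : R ⊆ classOf part i)
    (hRcard : R.card = r i) (k : Fin (r i)) :
    momMap part r i (zfun R) k = (0:ℚ) ^ (k : ℕ) := by
  simp only [momMap, LinearMap.coe_mk, AddHom.coe_mk]
  rw [← Finset.sum_subset hRsub (fun v _ hv => by rw [zfun_eq_zero hv, zero_mul])]
  rw [← zfun_moment (R := R) (k := (k:ℕ)) (by rw [hRcard]; exact k.2)]
  exact Finset.sum_congr rfl fun v _ => mul_comm _ _

lemma exists_Bset (i : Fin d) (hS : S i ⊆ classOf part i) (hScard : (S i).card = r i) :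
    ∃ B : Finset (α → ℚ), B.card + r i ≤ (classOf part i).card ∧
      ∀ R : Finset α, R ⊆ classOf part i → R.card = r i →
        (zfun R - zfun (S i)) ∈ Submodule.span ℚ (B : Set (α → ℚ)) := by
  classical
  set f := (momMap part r i).domRestrict (suppSub part i) with hf
  have hsurj : Function.Surjective f := by
    intro y
    obtain ⟨x, hx, hmom⟩ := momMap_surj hS hScard y
    exact ⟨⟨x, hx⟩, hmom⟩
  have hrange : Module.finrank ℚ ↥(LinearMap.range f) = r i := by
    rw [LinearMap.range_eq_top.2 hsurj, finrank_top]
    simp [Module.finrank_pi]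
  have hrank := LinearMap.finrank_range_add_finrank_ker f
  rw [hrange, finrank_suppSub] at hrank
  haveI hfd1 : FiniteDimensional ℚ ↥(LinearMap.ker f) :=
    FiniteDimensional.finiteDimensional_submodule _
  set bb := Module.Basis.ofVectorSpace ℚ ↥(LinearMap.ker f) with hbb
  haveI hft : Fintype ↥(Module.Basis.ofVectorSpaceIndex ℚ ↥(LinearMap.ker f)) :=
    @Fintype.ofFinite _ (Module.Finite.finite_basis bb)
  set B : Finset (α → ℚ) := Finset.univ.image
    (fun l : ↥(Module.Basis.ofVectorSpaceIndex ℚ ↥(LinearMap.ker f)) =>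
      ((bb l : ↥(suppSub part i)) : α → ℚ)) with hB
  refine ⟨B, ?_, ?_⟩
  · have h1 : B.card ≤ Module.finrank ℚ ↥(LinearMap.ker f) := by
      refine le_trans (Finset.card_image_le) ?_
      rw [Module.finrank_eq_card_basis bb]
      exact le_of_eq Finset.card_univ
    omega
  · intro R hRsub hRcard
    set x : α → ℚ := zfun R - zfun (S i) with hx
    have hsupp : ∀ v, v ∉ classOf part i → x v = 0 := by
      intro v hv
      have h1 : v ∉ R := fun h => hv (hRsub h)
      have h2 : v ∉ S i := fun h => hv (hS h)
      simp [hx, zfun_eq_zero h1, zfun_eq_zero h2]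
    have hx1 : x ∈ suppSub part i := mem_suppSub_of (part := part) hsupp
    have hmom : momMap part r i x = 0 := by
      funext k
      rw [hx, map_sub]
      simp only [Pi.sub_apply, Pi.zero_apply]
      rw [momMap_zfun hRsub hRcard k, momMap_zfun hS hScard k, sub_self]
    have hker : (⟨x, hx1⟩ : ↥(suppSub part i)) ∈ LinearMap.ker f := by
      rw [LinearMap.mem_ker]
      exact hmom
    set kk : ↥(LinearMap.ker f) := ⟨⟨x, hx1⟩, hker⟩ with hkk
    have hrepr := bb.sum_repr kk
    set Φ : ↥(LinearMap.ker f) →ₗ[ℚ] (α → ℚ) :=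
      (suppSub part i).subtype.comp (LinearMap.ker f).subtype with hPhi
    have h2 : Φ (∑ l, (bb.repr kk) l • bb l) = Φ kk := by rw [hrepr]
    rw [map_sum] at h2
    simp only [map_smul] at h2
    have h3 : Φ kk = x := rfl
    rw [h3] at h2
    rw [← h2]
    apply Submodule.sum_mem
    intro l _
    apply Submodule.smul_mem
    apply Submodule.subset_span
    have h4 : Φ (bb l) = ((bb l : ↥(suppSub part i)) : α → ℚ) := rfl
    rw [h4]
    exact Finset.mem_image_of_mem _ (Finset.mem_univ l)

end Lower2
/-! ### the psi vectors and the span bound -/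

section Psi

variable (part : α → Fin d) (q : ℕ)

noncomputable def psiv (K J : Finset (Fin d)) (A g : α → ℚ) : Finset α → ℚ :=
  fun e => if e ∈ mEdges part q ∧ K ⊆ e.image part
    then ∏ v ∈ e, (if part v ∈ J then g v else A v) else 0

noncomputable def hvec (g : α → ℚ) : Finset α → ℚ :=
  fun e => if e ∈ mEdges part q then ∏ v ∈ e, g v else 0

def updc (j : Fin d) (x g : α → ℚ) : α → ℚ := fun v => if part v = j then x v else g v

variable {part q}

lemma updc_self (j : Fin d) (g : α → ℚ) :
    updc part j (fun v => if part v = j then g v else 0) g = g := by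
  funext v
  simp only [updc]
  split_ifs with h <;> rfl

lemma psiv_insert_absorb {K J : Finset (Fin d)} {j : Fin d} (hjJ : j ∉ J) (A x g : α → ℚ) :
    psiv part q K (insert j J) A (updc part j x g) = psiv part q K J (updc part j x A) g := by
  funext e
  simp only [psiv]
  split_ifs with h
  · apply Finset.prod_congr rfl
    intro v hv
    by_cases h1 : part v = j
    · rw [if_pos (by rw [h1]; exact Finset.mem_insert_self _ _), updc, if_pos h1,
        if_neg (by rw [h1]; exact hjJ), updc, if_pos h1]
    · by_cases h2 : part v ∈ J
      · rw [if_pos (Finset.mem_insert_of_mem h2), updc, if_neg h1, if_pos h2]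
      · rw [if_neg (by simp [Finset.mem_insert, h1, h2]), if_neg h2, updc, if_neg h1]
  · rfl

lemma psiv_upd_eq {K J : Finset (Fin d)} {j : Fin d} (hjK : j ∈ K) (hjJ : j ∉ J)
    (A x g : α → ℚ) (e : Finset α) :
    psiv part q K (insert j J) A (updc part j x g) e
      = (∑ w ∈ e.filter (fun v => part v = j), x w) *
        psiv part q K J (updc part j (fun _ => 1) A) g e := by
  simp only [psiv]
  split_ifs with h
  · obtain ⟨he, hKe⟩ := h
    have hj : j ∈ e.image part := hKe hjK
    obtain ⟨w, hw, hpw⟩ := Finset.mem_image.1 hj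
    have hfilt : e.filter (fun v => part v = j) = {w} := by
      ext v
      simp only [Finset.mem_filter, Finset.mem_singleton]
      constructor
      · rintro ⟨hv, hpv⟩
        exact part_injOn he hv hw (hpv.trans hpw.symm)
      · rintro rfl
        exact ⟨hw, hpw⟩
    rw [hfilt, Finset.sum_singleton]
    rw [← Finset.mul_prod_erase e _ hw, ← Finset.mul_prod_erase e _ hw]
    have hfw : (if part w ∈ insert j J then updc part j x g w else A w) = x w := by
      rw [if_pos (by rw [hpw]; exact Finset.mem_insert_self _ _), updc, if_pos hpw]
    have hgw : (if part w ∈ J then g w else updc part j (fun _ => 1) A w) = 1 := by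
      rw [if_neg (by rw [hpw]; exact hjJ), updc, if_pos hpw]
    rw [hfw, hgw]
    have hrest : ∀ v ∈ e.erase w,
        (if part v ∈ insert j J then updc part j x g v else A v)
          = (if part v ∈ J then g v else updc part j (fun _ => 1) A v) := by
      intro v hv
      have hvw : v ≠ w := Finset.ne_of_mem_erase hv
      have hve : v ∈ e := Finset.mem_of_mem_erase hv
      have h1 : part v ≠ j := by
        intro h1
        exact hvw (part_injOn he hve hw (h1.trans hpw.symm))
      by_cases h2 : part v ∈ J
      · rw [if_pos (Finset.mem_insert_of_mem h2), updc, if_neg h1, if_pos h2]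
      · rw [if_neg (by simp [Finset.mem_insert, h1, h2]), if_neg h2, updc, if_neg h1]
    rw [Finset.prod_congr rfl hrest]
    ring
  · ring

end Psi

section PsiSpan

variable {part : α → Fin d} {r : Fin d → ℕ} {S : Fin d → Finset α}
  {B : Fin d → Finset (α → ℚ)}

lemma psiv_span
    (hB : ∀ j, (B j).card + r j ≤ (classOf part j).card)
    (J : Finset (Fin d)) :
    ∀ (K : Finset (Fin d)) (A : α → ℚ), J ⊆ K →
      ∃ F : Finset (Finset α → ℚ),
        F.card ≤ ∏ j ∈ J, ((classOf part j).card - r j) ∧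
        ∀ g : α → ℚ,
          (∀ j ∈ J, (fun v => if part v = j then g v else 0)
            ∈ Submodule.span ℚ ((B j : Set (α → ℚ)))) →
          psiv part q K J A g ∈ Submodule.span ℚ (F : Set (Finset α → ℚ)) := by
  classical
  induction J using Finset.induction_on with
  | empty =>
    intro K A _
    refine ⟨{psiv part q K ∅ A 0}, by simp, ?_⟩
    intro g _
    have : psiv part q K ∅ A g = psiv part q K ∅ A 0 := by
      funext e
      simp only [psiv]
      split_ifs with h
      · apply Finset.prod_congr rfl
        intro v hv
        simp
      · rfl
    rw [this]
    apply Submodule.subset_span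
    simp
  | @insert j J hjJ IH =>
    intro K A hJK
    have hjK : j ∈ K := hJK (Finset.mem_insert_self _ _)
    have hJK' : J ⊆ K := fun x hx => hJK (Finset.mem_insert_of_mem hx)
    choose FF hFcard hFmem using fun (b : α → ℚ) => IH K (updc part j b A) hJK'
    set F : Finset (Finset α → ℚ) := (B j).biUnion (fun b => FF b) with hF
    refine ⟨F, ?_, ?_⟩
    · calc F.card ≤ ∑ b ∈ B j, (FF b).card := Finset.card_biUnion_le
        _ ≤ ∑ _b ∈ B j, ∏ j' ∈ J, ((classOf part j').card - r j') :=
            Finset.sum_le_sum fun b _ => hFcard b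
        _ = (B j).card * ∏ j' ∈ J, ((classOf part j').card - r j') := by
            rw [Finset.sum_const, smul_eq_mul]
        _ ≤ ((classOf part j).card - r j) * ∏ j' ∈ J, ((classOf part j').card - r j') := by
            apply Nat.mul_le_mul_right
            have := hB j
            omega
        _ = ∏ j' ∈ insert j J, ((classOf part j').card - r j') := by
            rw [Finset.prod_insert hjJ]
    · intro g hg
      have hgj := hg j (Finset.mem_insert_self _ _)
      have hgJ : ∀ j' ∈ J, (fun v => if part v = j' then g v else 0)
          ∈ Submodule.span ℚ ((B j' : Set (α → ℚ))) :=
        fun j' hj' => hg j' (Finset.mem_insert_of_mem hj')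
      have hrw : psiv part q K (insert j J) A g
          = psiv part q K (insert j J) A
              (updc part j (fun v => if part v = j then g v else 0) g) := by
        rw [updc_self]
      rw [hrw]
      refine Submodule.span_induction ?_ ?_ ?_ ?_ hgj
      · intro b hb
        rw [psiv_insert_absorb hjJ]
        have hmem := hFmem b g hgJ
        refine Submodule.span_mono ?_ hmem
        intro y hy
        exact Finset.mem_coe.2 (Finset.mem_biUnion.2 ⟨b, hb, Finset.mem_coe.1 hy⟩)
      · have : psiv part q K (insert j J) A (updc part j 0 g) = 0 := by
          funext e
          rw [psiv_upd_eq hjK hjJ]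
          simp
        rw [this]
        exact Submodule.zero_mem _
      · intro x y _ _ hx hy
        have : psiv part q K (insert j J) A (updc part j (x + y) g)
            = psiv part q K (insert j J) A (updc part j x g)
              + psiv part q K (insert j J) A (updc part j y g) := by
          funext e
          rw [Pi.add_apply, psiv_upd_eq hjK hjJ, psiv_upd_eq hjK hjJ, psiv_upd_eq hjK hjJ]
          simp only [Pi.add_apply]
          rw [Finset.sum_add_distrib, add_mul]
        rw [this]
        exact Submodule.add_mem _ hx hy
      · intro c x _ hx
        have : psiv part q K (insert j J) A (updc part j (c • x) g)
            = c • psiv part q K (insert j J) A (updc part j x g) := by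
          funext e
          rw [psiv_upd_eq hjK hjJ, Pi.smul_apply, psiv_upd_eq hjK hjJ]
          have hsum : ∑ w ∈ e.filter (fun v => part v = j), (c • x) w
              = c * ∑ w ∈ e.filter (fun v => part v = j), x w := by
            rw [Finset.mul_sum]
            exact Finset.sum_congr rfl fun w _ => by simp [smul_eq_mul]
          rw [hsum, smul_eq_mul]
          ring
        rw [this]
        exact Submodule.smul_mem _ _ hx

end PsiSpan
/-! ### decomposition of the witness vectors -/

section Decomp

variable {part : α → Fin d} {q : ℕ}

noncomputable def zg (part : α → Fin d) (R : Finset α) : α → ℚ :=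
  fun v => zfun (R.filter fun w => part w = part v) v

def deltav (e : Finset α) : Finset α → ℚ := Pi.single e (1:ℚ)

lemma hvec_decomp (a dd : α → ℚ) :
    hvec part q (a + dd)
      = ∑ J ∈ (Finset.univ : Finset (Fin d)).powerset.filter (fun J => J.card ≤ q),
          psiv part q J J a dd := by
  classical
  funext e
  rw [Finset.sum_apply]
  by_cases he : e ∈ mEdges part q
  · rw [hvec, if_pos he]
    have hstep1 : ∑ J ∈ (Finset.univ : Finset (Fin d)).powerset.filter (fun J => J.card ≤ q),
        psiv part q J J a dd e
        = ∑ J ∈ (e.image part).powerset, psiv part q J J a dd e := by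
      apply (Finset.sum_subset ?_ ?_).symm
      · intro J hJ
        rw [Finset.mem_powerset] at hJ
        rw [Finset.mem_filter, Finset.mem_powerset]
        refine ⟨Finset.subset_univ _, ?_⟩
        calc J.card ≤ (e.image part).card := Finset.card_le_card hJ
          _ = q := image_part_card he
      · intro J _ hJ
        rw [Finset.mem_powerset] at hJ
        rw [psiv, if_neg (fun hc => hJ hc.2)]
    rw [hstep1]
    have hstep2 : ∀ J ∈ (e.image part).powerset,
        psiv part q J J a dd e = ∏ v ∈ e, (if part v ∈ J then dd v else a v) := by
      intro J hJ
      rw [psiv, if_pos ⟨he, Finset.mem_powerset.1 hJ⟩]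
    rw [Finset.sum_congr rfl hstep2]
    have hprod : ∀ v ∈ e, (a + dd) v = dd v + a v := by
      intro v _
      rw [Pi.add_apply, add_comm]
    rw [Finset.prod_congr rfl hprod, Finset.prod_add]
    apply Finset.sum_nbij' (fun t => t.image part) (fun J => e.filter (fun v => part v ∈ J))
    · intro t ht
      rw [Finset.mem_powerset] at ht ⊢
      exact Finset.image_subset_image ht
    · intro J _
      rw [Finset.mem_powerset]
      exact Finset.filter_subset _ _
    · intro t ht
      rw [Finset.mem_powerset] at ht
      ext v
      simp only [Finset.mem_filter, Finset.mem_image]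
      constructor
      · rintro ⟨hv, w, hw, hpw⟩
        have : w = v := part_injOn he (ht hw) hv hpw
        exact this ▸ hw
      · intro hv
        exact ⟨ht hv, v, hv, rfl⟩
    · intro J hJ
      rw [Finset.mem_powerset] at hJ
      ext j
      simp only [Finset.mem_image, Finset.mem_filter]
      constructor
      · rintro ⟨v, ⟨hv, hj⟩, rfl⟩
        exact hj
      · intro hj
        obtain ⟨w, hw, rfl⟩ := Finset.mem_image.1 (hJ hj)
        exact ⟨w, ⟨hw, hj⟩, rfl⟩
    · intro t ht
      rw [Finset.mem_powerset] at ht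
      have hsplit : ∏ v ∈ e, (if part v ∈ t.image part then dd v else a v)
          = (∏ v ∈ t, (if part v ∈ t.image part then dd v else a v))
            * ∏ v ∈ e \ t, (if part v ∈ t.image part then dd v else a v) := by
        rw [← Finset.prod_sdiff ht, mul_comm]
      rw [hsplit]
      congr 1
      · apply Finset.prod_congr rfl
        intro v hv
        rw [if_pos (Finset.mem_image_of_mem part hv)]
      · apply Finset.prod_congr rfl
        intro v hv
        obtain ⟨hve, hvt⟩ := Finset.mem_sdiff.1 hv
        rw [if_neg ?_]
        rintro hmem
        obtain ⟨w, hw, hpw⟩ := Finset.mem_image.1 hmem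
        exact hvt ((part_injOn he (ht hw) hve hpw) ▸ hw)
  · rw [hvec, if_neg he]
    apply (Finset.sum_eq_zero _).symm
    intro J _
    rw [psiv, if_neg (fun hc => he hc.1)]

lemma zg_apply_ne_zero {R : Finset α} {v : α} (hv : v ∈ R) : zg part R v ≠ 0 :=
  zfun_ne_zero (Finset.mem_filter.2 ⟨hv, rfl⟩)

lemma zg_apply_eq_zero {R : Finset α} {v : α} (hv : v ∉ R) : zg part R v = 0 :=
  zfun_eq_zero (fun hc => hv (Finset.mem_filter.1 hc).1)

lemma hvec_eq_sum_delta (R : Finset α) :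
    hvec part q (zg part R)
      = ∑ f ∈ indEdges part q R, (∏ v ∈ f, zg part R v) • deltav f := by
  classical
  funext e
  rw [Finset.sum_apply]
  have hterm : ∀ f, ((∏ v ∈ f, zg part R v) • deltav f) e
      = (∏ v ∈ f, zg part R v) * (if e = f then 1 else 0) := by
    intro f
    rw [Pi.smul_apply, smul_eq_mul, deltav, Pi.single_apply]
  rw [Finset.sum_congr rfl fun f _ => hterm f]
  by_cases he : e ∈ indEdges part q R
  · rw [Finset.sum_eq_single_of_mem e he ?_]
    · rw [if_pos rfl, mul_one, hvec, if_pos (Finset.mem_filter.1 he).1]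
    · intro f _ hfe
      rw [if_neg (Ne.symm hfe), mul_zero]
  · have hz : ∀ f ∈ indEdges part q R, (∏ v ∈ f, zg part R v) * (if e = f then 1 else 0) = 0 := by
      intro f _
      rw [if_neg, mul_zero]
      rintro rfl
      exact he (by assumption)
    rw [Finset.sum_eq_zero hz, hvec]
    by_cases hem : e ∈ mEdges part q
    · rw [if_pos hem]
      have hnotsub : ¬ e ⊆ R := by
        intro hsub
        exact he (Finset.mem_filter.2 ⟨hem, hsub⟩)
      obtain ⟨v, hv, hvR⟩ := Finset.not_subset.1 hnotsub
      exact Finset.prod_eq_zero hv (zg_apply_eq_zero hvR)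
    · rw [if_neg hem]

lemma coeff_ne_zero {R : Finset α} {f : Finset α} (hf : f ∈ indEdges part q R) :
    (∏ v ∈ f, zg part R v) ≠ 0 := by
  apply Finset.prod_ne_zero_iff.2
  intro v hv
  exact zg_apply_ne_zero ((Finset.mem_filter.1 hf).2 hv)

end Decomp
/-! ### the lower bound -/

section LowerMain

variable {part : α → Fin d} {r : Fin d → ℕ} {S : Fin d → Finset α}

noncomputable def abasef (part : α → Fin d) (S : Fin d → Finset α) : α → ℚ :=
  fun w => zfun (S (part w)) w

lemma zg_sub_classcomp (hS : ∀ i, S i ⊆ classOf part i) (R : Finset α) (j : Fin d) :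
    (fun v => if part v = j then (zg part R - abasef part S) v else 0)
      = zfun (R.filter fun w => part w = j) - zfun (S j) := by
  funext v
  by_cases h : part v = j
  · rw [if_pos h]
    simp only [Pi.sub_apply, zg, abasef, h]
  · rw [if_neg h]
    have h1 : v ∉ R.filter (fun w => part w = j) := by
      intro hc
      exact h (Finset.mem_filter.1 hc).2
    have h2 : v ∉ S j := by
      intro hc
      exact h (mem_classOf.1 (hS j hc))
    simp only [Pi.sub_apply, zfun_eq_zero h1, zfun_eq_zero h2, sub_zero]

lemma lower_bound (hS : ∀ i, S i ⊆ classOf part i) (hScard : ∀ i, (S i).card = r i)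
    {G : Finset (Finset α)} (hsat : DirWeaklySat part q r G) :
    (mEdges part q).card ≤ G.card
      + ∑ J ∈ (Finset.univ : Finset (Fin d)).powerset.filter (fun J => J.card ≤ q),
          ∏ j ∈ J, ((classOf part j).card - r j) := by
  classical
  choose B hB1 hB2 using fun i => exists_Bset i (hS i) (hScard i)
  have hps := fun (J : Finset (Fin d)) =>
    psiv_span (q := q) (B := B) hB1 J J (abasef part S) subset_rfl
  choose Fj hFjc hFjm using hps
  set pf := (Finset.univ : Finset (Fin d)).powerset.filter (fun J => J.card ≤ q) with hpf
  set Fstar := pf.biUnion Fj with hFstar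
  have hFstarcard : Fstar.card ≤ ∑ J ∈ pf, ∏ j ∈ J, ((classOf part j).card - r j) :=
    le_trans Finset.card_biUnion_le (Finset.sum_le_sum fun J _ => hFjc J)
  have hwit : ∀ R : Finset α, (∀ i, (R.filter fun v => part v = i).card = r i) →
      hvec part q (zg part R) ∈ Submodule.span ℚ (Fstar : Set (Finset α → ℚ)) := by
    intro R hR
    have hzg : zg part R = abasef part S + (zg part R - abasef part S) := by
      funext v
      simp only [Pi.add_apply, Pi.sub_apply]
      ring
    rw [hzg, hvec_decomp]
    apply Submodule.sum_mem
    intro J hJ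
    have hcond : ∀ j ∈ J, (fun v => if part v = j then (zg part R - abasef part S) v else 0)
        ∈ Submodule.span ℚ ((B j : Set (α → ℚ))) := by
      intro j _
      rw [zg_sub_classcomp hS R j]
      apply hB2 j
      · intro v hv
        exact mem_classOf.2 (Finset.mem_filter.1 hv).2
      · exact hR j
    refine Submodule.span_mono ?_ (hFjm J (zg part R - abasef part S) hcond)
    intro y hy
    exact Finset.mem_coe.2 (Finset.mem_biUnion.2 ⟨J, hJ, Finset.mem_coe.1 hy⟩)
  obtain ⟨hGsub, L, hnodup, htof, hcopy⟩ := hsat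
  set W0 : Submodule ℚ (Finset α → ℚ) :=
    Submodule.span ℚ ((G.image deltav : Finset (Finset α → ℚ)) : Set (Finset α → ℚ))
      ⊔ Submodule.span ℚ (Fstar : Set (Finset α → ℚ)) with hW0
  have hGdelta : ∀ f ∈ G, deltav f ∈ W0 := fun f hf =>
    (le_sup_left : _ ≤ W0)
      (Submodule.subset_span (Finset.mem_coe.2 (Finset.mem_image_of_mem _ hf)))
  have hstep : ∀ k : ℕ, ∀ f ∈ G ∪ (L.take k).toFinset, deltav f ∈ W0 := by
    intro k
    induction k with
    | zero =>
      intro f hf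
      rw [List.take_zero] at hf
      simp only [List.toFinset_nil, Finset.union_empty] at hf
      exact hGdelta f hf
    | succ k IH =>
      intro f hf
      by_cases hk : k < L.length
      swap
      · apply IH
        have h1 : L.take (k+1) = L.take k := by
          rw [List.take_of_length_le (by omega), List.take_of_length_le (by omega)]
        rwa [h1] at hf
      · rcases Finset.mem_union.1 hf with hfG | hfT
        · exact hGdelta f hfG
        rw [List.mem_toFinset, List.take_succ] at hfT
        rcases List.mem_append.1 hfT with h1 | h1
        · exact IH f (Finset.mem_union_right _ (List.mem_toFinset.2 h1))
        have hf0 : f = L.get ⟨k, hk⟩ := by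
          rw [List.getElem?_eq_getElem hk] at h1
          simpa using h1
        obtain ⟨R, hRc, heIn, hInd⟩ := hcopy ⟨k, hk⟩
        rw [hf0]
        set e0 := L.get ⟨k, hk⟩ with he0
        set c : Finset α → ℚ := fun f' => ∏ v ∈ f', zg part R v with hc
        have hc0 : c e0 ≠ 0 := coeff_ne_zero heIn
        have htot : hvec part q (zg part R)
            = c e0 • deltav e0 + ∑ f' ∈ (indEdges part q R).erase e0, c f' • deltav f' := by
          rw [hvec_eq_sum_delta]
          exact (Finset.add_sum_erase _ _ heIn).symm
        have hrest : ∀ f' ∈ (indEdges part q R).erase e0, deltav f' ∈ W0 := by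
          intro f' hf'
          have hf'' := hInd (Finset.mem_of_mem_erase hf')
          rcases Finset.mem_union.1 hf'' with h2 | h2
          · exact hGdelta f' h2
          · rw [List.mem_toFinset, List.take_succ] at h2
            rcases List.mem_append.1 h2 with h3 | h3
            · exact IH f' (Finset.mem_union_right _ (List.mem_toFinset.2 h3))
            · exfalso
              rw [List.getElem?_eq_getElem hk] at h3
              simp only [Option.toList_some, List.mem_singleton] at h3
              exact (Finset.ne_of_mem_erase hf') (h3.trans he0.symm ▸ rfl)
        have hdelta : deltav e0 = (c e0)⁻¹ • (hvec part q (zg part R)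
            - ∑ f' ∈ (indEdges part q R).erase e0, c f' • deltav f') := by
          rw [htot, add_sub_cancel_right, inv_smul_smul₀ hc0]
        rw [hdelta]
        apply Submodule.smul_mem
        apply Submodule.sub_mem
        · exact (le_sup_right : _ ≤ W0) (hwit R hRc)
        · exact Submodule.sum_mem _ fun f' hf' =>
            Submodule.smul_mem _ _ (hrest f' hf')
  have hall : ∀ f ∈ mEdges part q, deltav f ∈ W0 := by
    intro f hf
    by_cases hfG : f ∈ G
    · exact hGdelta f hfG
    · have hfL : f ∈ L.toFinset := by
        rw [htof]
        exact Finset.mem_sdiff.2 ⟨hf, hfG⟩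
      have := hstep L.length f
      apply this
      rw [List.take_length]
      exact Finset.mem_union_right _ hfL
  -- rank count
  have hli : LinearIndependent ℚ (fun f : ↥(mEdges part q) => deltav (f : Finset α)) := by
    have h2 := (Pi.basisFun ℚ (Finset α)).linearIndependent
    have h3 := h2.comp (Subtype.val : ↥(mEdges part q) → Finset α) Subtype.val_injective
    convert h3 using 1
    funext f
    rw [Function.comp_apply, Pi.basisFun_apply]
    rfl
  have hrange : Set.range (fun f : ↥(mEdges part q) => deltav (f : Finset α))
      = deltav '' ((mEdges part q : Finset (Finset α)) : Set (Finset α)) := by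
    ext y
    simp only [Set.mem_range, Set.mem_image, Finset.mem_coe]
    constructor
    · rintro ⟨⟨f, hf⟩, rfl⟩; exact ⟨f, hf, rfl⟩
    · rintro ⟨f, hf, rfl⟩; exact ⟨⟨f, hf⟩, rfl⟩
  have h2 : Module.finrank ℚ (Submodule.span ℚ (deltav '' ((mEdges part q : Finset (Finset α)) : Set (Finset α))))
      = (mEdges part q).card := by
    rw [← hrange, finrank_span_eq_card hli, Fintype.card_coe]
  have h1 : Submodule.span ℚ (deltav '' ((mEdges part q : Finset (Finset α)) : Set (Finset α))) ≤ W0 := by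
    rw [Submodule.span_le]
    rintro y ⟨f, hf, rfl⟩
    exact hall f hf
  have h3 : Module.finrank ℚ W0
      ≤ G.card + ∑ J ∈ pf, ∏ j ∈ J, ((classOf part j).card - r j) := by
    have h4 := Submodule.finrank_sup_add_finrank_inf_eq
      (Submodule.span ℚ ((G.image deltav : Finset (Finset α → ℚ)) : Set (Finset α → ℚ)))
      (Submodule.span ℚ (Fstar : Set (Finset α → ℚ)))
    have h5 : Module.finrank ℚ
        (Submodule.span ℚ ((G.image deltav : Finset (Finset α → ℚ)) : Set (Finset α → ℚ)))
        ≤ G.card := le_trans (finrank_span_finset_le_card _) Finset.card_image_le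
    have h6 : Module.finrank ℚ (Submodule.span ℚ (Fstar : Set (Finset α → ℚ)))
        ≤ ∑ J ∈ pf, ∏ j ∈ J, ((classOf part j).card - r j) :=
      le_trans (finrank_span_finset_le_card _) hFstarcard
    rw [hW0]
    omega
  calc (mEdges part q).card
      = Module.finrank ℚ (Submodule.span ℚ (deltav '' ((mEdges part q : Finset (Finset α)) : Set (Finset α)))) := h2.symm
    _ ≤ Module.finrank ℚ W0 := Submodule.finrank_mono h1
    _ ≤ _ := h3

end LowerMain
/-! ### glue -/

end MW

open MW in
/-- Theorem 1 (main theorem): the directed weak saturation number of `K^q_r` in `K^q_n`. -/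
theorem mwsat_eq {α : Type*} [Fintype α] [DecidableEq α] {d q : ℕ} (part : α → Fin d)
    (r : Fin d → ℕ) (hq : 2 ≤ q) (hdq : q ≤ d)
    (hr1 : ∀ i, 1 ≤ r i) (hrn : ∀ i, r i ≤ (classOf part i).card) :
    (mwsat part q r : ℤ) =
      ∑ I ∈ (Finset.univ : Finset (Fin d)).powersetCard q,
          ∏ i ∈ I, ((classOf part i).card : ℤ)
        - ∑ I ∈ (Finset.univ : Finset (Fin d)).powerset.filter (fun I => I.card ≤ q),
            ∏ i ∈ I, (((classOf part i).card : ℤ) - (r i : ℤ)) := by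
  classical
  choose S hS hScard using fun i => Finset.exists_subset_card_eq (hrn i)
  choose s0 hs0 using fun i => Finset.card_pos.1
    (by rw [hScard i]; exact hr1 i : 0 < (S i).card)
  have hsat : DirWeaklySat part q r (Gstar part S s0 q) :=
    gstar_sat hS hs0 hScard hdq
  set M := (mEdges part q).card with hM
  set T := ∑ J ∈ (Finset.univ : Finset (Fin d)).powerset.filter (fun J => J.card ≤ q),
      ∏ j ∈ J, ((classOf part j).card - r j) with hT
  have hDcard : (Dset part S s0 q).card = T := by
    rw [card_Dset hS hs0 hdq, hT]
    apply Finset.sum_congr rfl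
    intro J _
    apply Finset.prod_congr rfl
    intro j _
    rw [tl, Finset.card_sdiff_of_subset (hS j), hScard j]
  have hGcard : (Gstar part S s0 q).card = M - T := by
    rw [card_Gstar hS hs0 hScard hdq, hDcard]
  have hTleM : T ≤ M := by
    rw [← hDcard, hM]
    exact Finset.card_le_card (Dset_subset_mEdges hS hs0 hdq)
  have hval : mwsat part q r = M - T := by
    unfold mwsat
    have hub : sInf {m | ∃ G, DirWeaklySat part q r G ∧ G.card = m} ≤ M - T :=
      Nat.sInf_le ⟨Gstar part S s0 q, hsat, hGcard⟩
    have hne : {m | ∃ G, DirWeaklySat part q r G ∧ G.card = m}.Nonempty :=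
      ⟨M - T, Gstar part S s0 q, hsat, hGcard⟩
    obtain ⟨G0, hG0sat, hG0card⟩ := Nat.sInf_mem hne
    have hlb : M ≤ sInf {m | ∃ G, DirWeaklySat part q r G ∧ G.card = m} + T := by
      rw [← hG0card]
      exact lower_bound hS hScard hG0sat
    omega
  have hMZ : (M : ℤ) = ∑ I ∈ (Finset.univ : Finset (Fin d)).powersetCard q,
      ∏ i ∈ I, ((classOf part i).card : ℤ) := by
    rw [hM, card_mEdges]
    push_cast
    rfl
  have hTZ : (T : ℤ) = ∑ I ∈ (Finset.univ : Finset (Fin d)).powerset.filter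
      (fun I => I.card ≤ q), ∏ i ∈ I, (((classOf part i).card : ℤ) - (r i : ℤ)) := by
    rw [hT, Nat.cast_sum]
    apply Finset.sum_congr rfl
    intro J _
    rw [Nat.cast_prod]
    apply Finset.prod_congr rfl
    intro j _
    rw [Nat.cast_sub (hrn j)]
  rw [hval, Nat.cast_sub hTleM, hMZ, hTZ]
end

section
/- Let d ≥ q ≥ 2, let N = N_1 ⊔ … ⊔ N_d with |N_i| = n_i ≥ r_i ≥ 1, fix R ⊆ N with |R ∩ N_i| = r_i for all i, let Σ be the set of all S ⊆ N∖R of size at most q meeting each N_i in at most one vertex, and for each S ∈ Σ choose an edge λ(S) ∈ K^q_n[R ∪ S] with S ⊆ λ(S). Then the q-graph G := K^q_n ∖ ⋃_{S∈Σ} λ(S) is directed weakly K^q_r-saturated in K^q_n, and |E(G)| = Σ_{I ∈ binom([d],q)} Π_{i∈I} n_i − Σ_{I ∈ binom([d],≤q)} Π_{i∈I} (n_i − r_i); consequently mwsat(K^q_n, K^q_r) is at most this quantity. -/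
open Finset

set_option linter.unusedSectionVars false


lemma count_classes {α : Type*} [Fintype α] [DecidableEq α] {d : ℕ} (part : α → Fin d)
    (W : Finset α) (I : Finset (Fin d)) :
    (W.powerset.filter fun e => (∀ i, (e.filter fun v => part v = i).card ≤ 1) ∧
        e.image part = I).card
      = ∏ i ∈ I, (W.filter fun v => part v = i).card := by
  classical
  rw [← Finset.card_pi]
  refine (Finset.card_bij (fun f _ => I.attach.image fun i => f i.1 i.2) ?_ ?_ ?_).symm
  · intro f hf
    rw [Finset.mem_pi] at hf
    simp only [Finset.mem_filter, Finset.mem_powerset]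
    have hmem : ∀ (i : Fin d) (hi : i ∈ I), f i hi ∈ W ∧ part (f i hi) = i := by
      intro i hi
      have := hf i hi
      simpa using Finset.mem_filter.mp this
    refine ⟨?_, ?_, ?_⟩
    · intro x hx
      simp only [Finset.mem_image, Finset.mem_attach, true_and] at hx
      obtain ⟨⟨i, hi⟩, rfl⟩ := hx
      exact (hmem i hi).1
    · intro j
      refine Finset.card_le_one.mpr ?_
      intro x hx y hy
      simp only [Finset.mem_filter, Finset.mem_image, Finset.mem_attach, true_and] at hx hy
      obtain ⟨⟨⟨i, hi⟩, rfl⟩, hpx⟩ := hx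
      obtain ⟨⟨⟨i', hi'⟩, rfl⟩, hpy⟩ := hy
      have : i = i' := by rw [← (hmem i hi).2, ← (hmem i' hi').2, hpx, hpy]
      subst this; rfl
    · ext j
      simp only [Finset.mem_image, Finset.mem_attach, true_and]
      constructor
      · rintro ⟨x, ⟨⟨i, hi⟩, rfl⟩, rfl⟩
        rw [(hmem i hi).2]; exact hi
      · intro hj
        exact ⟨f j hj, ⟨⟨j, hj⟩, rfl⟩, (hmem j hj).2⟩
  · intro f hf g hg hfg
    rw [Finset.mem_pi] at hf hg
    have hmemf : ∀ (i : Fin d) (hi : i ∈ I), part (f i hi) = i := by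
      intro i hi; simpa using (Finset.mem_filter.mp (hf i hi)).2
    have hmemg : ∀ (i : Fin d) (hi : i ∈ I), part (g i hi) = i := by
      intro i hi; simpa using (Finset.mem_filter.mp (hg i hi)).2
    funext i hi
    have : f i hi ∈ I.attach.image fun i => g i.1 i.2 := by
      rw [← hfg]
      exact Finset.mem_image.mpr ⟨⟨i, hi⟩, Finset.mem_attach _ _, rfl⟩
    simp only [Finset.mem_image, Finset.mem_attach, true_and] at this
    obtain ⟨⟨i', hi'⟩, heq⟩ := this
    have : i' = i := by rw [← hmemg i' hi', heq, hmemf i hi]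
    subst this
    exact heq.symm
  · intro e he
    simp only [Finset.mem_filter, Finset.mem_powerset] at he
    obtain ⟨heW, hle, himg⟩ := he
    have hone : ∀ (i : Fin d), i ∈ I → ∃ a, e.filter (fun v => part v = i) = {a} := by
      intro i hi
      rw [← himg] at hi
      obtain ⟨x, hx, hpx⟩ := Finset.mem_image.mp hi
      refine Finset.card_eq_one.mp (le_antisymm (hle i) ?_)
      exact Finset.card_pos.mpr ⟨x, Finset.mem_filter.mpr ⟨hx, hpx⟩⟩
    refine ⟨fun i hi => (hone i hi).choose, ?_, ?_⟩
    · rw [Finset.mem_pi]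
      intro i hi
      have h1 : (hone i hi).choose ∈ e.filter (fun v => part v = i) :=
        Finset.le_iff_subset.mp ((hone i hi).choose_spec).symm.le (Finset.mem_singleton_self _)
      exact Finset.mem_of_subset (Finset.filter_subset_filter _ heW) h1
    · apply Finset.Subset.antisymm
      · intro x hx
        simp only [Finset.mem_image, Finset.mem_attach, true_and] at hx
        obtain ⟨⟨i, hi⟩, rfl⟩ := hx
        have h1 : (hone i hi).choose ∈ e.filter (fun v => part v = i) :=
          Finset.le_iff_subset.mp ((hone i hi).choose_spec).symm.le (Finset.mem_singleton_self _)
        exact (Finset.mem_filter.mp h1).1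
      · intro x hx
        have hpx : part x ∈ I := by
          rw [← himg]; exact Finset.mem_image_of_mem _ hx
        have h1 : x ∈ e.filter (fun v => part v = part x) :=
          Finset.mem_filter.mpr ⟨hx, rfl⟩
        rw [(hone (part x) hpx).choose_spec, Finset.mem_singleton] at h1
        rw [h1]
        exact Finset.mem_image.mpr ⟨⟨part x, hpx⟩, Finset.mem_attach _ _, rfl⟩

section
variable {α : Type*} [Fintype α] [DecidableEq α] {d : ℕ} (part : α → Fin d)

lemma injOn_part (e : Finset α) (hle : ∀ i, (e.filter fun v => part v = i).card ≤ 1) :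
    Set.InjOn part e := by
  intro x hx y hy hxy
  refine Finset.card_le_one.mp (hle (part x)) x ?_ y ?_
  · exact Finset.mem_filter.mpr ⟨hx, rfl⟩
  · exact Finset.mem_filter.mpr ⟨hy, hxy.symm⟩

lemma card_image_part (e : Finset α) (hle : ∀ i, (e.filter fun v => part v = i).card ≤ 1) :
    (e.image part).card = e.card :=
  Finset.card_image_of_injOn (injOn_part part e hle)

lemma mEdges_card (q : ℕ) :
    (mEdges part q).card = ∑ I ∈ (Finset.univ : Finset (Fin d)).powersetCard q,
      ∏ i ∈ I, (classOf part i).card := by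
  classical
  rw [Finset.card_eq_sum_card_fiberwise (f := fun e => e.image part)
    (t := (Finset.univ : Finset (Fin d)).powersetCard q) ?_]
  · refine Finset.sum_congr rfl fun I hI => ?_
    rw [Finset.mem_powersetCard] at hI
    have : (mEdges part q).filter (fun e => e.image part = I)
        = (Finset.univ : Finset α).powerset.filter
            fun e => (∀ i, (e.filter fun v => part v = i).card ≤ 1) ∧ e.image part = I := by
      ext e
      simp only [mEdges, Finset.mem_filter, Finset.mem_powersetCard, Finset.mem_powerset]
      constructor
      · rintro ⟨⟨⟨hsub, hcard⟩, hle⟩, himg⟩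
        exact ⟨hsub, hle, himg⟩
      · rintro ⟨hsub, hle, himg⟩
        refine ⟨⟨⟨hsub, ?_⟩, hle⟩, himg⟩
        rw [← card_image_part part e hle, himg, hI.2]
    rw [this, count_classes]
    rfl
  · intro e he
    simp only [Finset.mem_coe, mEdges, Finset.mem_filter, Finset.mem_powersetCard] at he
    rw [Finset.mem_coe, Finset.mem_powersetCard]
    exact ⟨Finset.subset_univ _, by rw [card_image_part part e he.2, he.1.2]⟩

lemma sig_card (q : ℕ) (R : Finset α) :
    ((Finset.univ \ R).powerset.filter (fun S =>
        S.card ≤ q ∧ ∀ i : Fin d, (S.filter fun v => part v = i).card ≤ 1)).card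
      = ∑ I ∈ (Finset.univ : Finset (Fin d)).powerset.filter (fun I => I.card ≤ q),
          ∏ i ∈ I, ((Finset.univ \ R).filter fun v => part v = i).card := by
  classical
  rw [Finset.card_eq_sum_card_fiberwise (f := fun e => e.image part)
    (t := (Finset.univ : Finset (Fin d)).powerset.filter (fun I => I.card ≤ q)) ?_]
  · refine Finset.sum_congr rfl fun I hI => ?_
    rw [Finset.mem_filter] at hI
    have : (((Finset.univ \ R).powerset.filter (fun S =>
        S.card ≤ q ∧ ∀ i : Fin d, (S.filter fun v => part v = i).card ≤ 1)).filter
          (fun e => e.image part = I))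
        = (Finset.univ \ R).powerset.filter
            fun e => (∀ i, (e.filter fun v => part v = i).card ≤ 1) ∧ e.image part = I := by
      ext e
      simp only [Finset.mem_filter, Finset.mem_powerset]
      constructor
      · rintro ⟨⟨hsub, _, hle⟩, himg⟩
        exact ⟨hsub, hle, himg⟩
      · rintro ⟨hsub, hle, himg⟩
        refine ⟨⟨hsub, ?_, hle⟩, himg⟩
        rw [← card_image_part part e hle, himg]
        exact hI.2
    rw [this, count_classes]
  · intro e he
    simp only [Finset.mem_coe, Finset.mem_filter, Finset.mem_powerset] at he
    rw [Finset.mem_coe, Finset.mem_filter, Finset.mem_powerset]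
    refine ⟨Finset.subset_univ _, ?_⟩
    rw [card_image_part part e he.2.2]
    exact he.2.1

end


/-- Lemma 2.1 (upper bound construction): for any choice of `λ(S) ∈ K^q_n[R ∪ S]` with
`S ⊆ λ(S)` (for `S` ranging over the sets in `Σ`), the `q`-graph
`G = K^q_n ∖ ⋃_{S ∈ Σ} λ(S)` is directed weakly `K^q_r`-saturated in `K^q_n`, it has the
expected number of edges, and consequently `mwsat(K^q_n, K^q_r)` is at most that quantity. -/
theorem construction_upper_bound {α : Type*} [Fintype α] [DecidableEq α] {d q : ℕ}
    (part : α → Fin d) (r : Fin d → ℕ) (hq : 2 ≤ q) (hdq : q ≤ d)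
    (hr1 : ∀ i, 1 ≤ r i) (hrn : ∀ i, r i ≤ (classOf part i).card)
    (R : Finset α) (hR : ∀ i, (R.filter fun v => part v = i).card = r i)
    (lam : Finset α → Finset α)
    (hlam : ∀ S ∈ (Finset.univ \ R).powerset.filter (fun S =>
        S.card ≤ q ∧ ∀ i : Fin d, (S.filter fun v => part v = i).card ≤ 1),
      lam S ∈ indEdges part q (R ∪ S) ∧ S ⊆ lam S) :
    ∀ G : Finset (Finset α),
      G = mEdges part q \
        ((Finset.univ \ R).powerset.filter (fun S =>
          S.card ≤ q ∧ ∀ i : Fin d, (S.filter fun v => part v = i).card ≤ 1)).image lam →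
      DirWeaklySat part q r G ∧
      (G.card : ℤ) =
        ∑ I ∈ (Finset.univ : Finset (Fin d)).powersetCard q,
            ∏ i ∈ I, ((classOf part i).card : ℤ)
          - ∑ I ∈ (Finset.univ : Finset (Fin d)).powerset.filter (fun I => I.card ≤ q),
              ∏ i ∈ I, (((classOf part i).card : ℤ) - (r i : ℤ)) ∧
      (mwsat part q r : ℤ) ≤
        ∑ I ∈ (Finset.univ : Finset (Fin d)).powersetCard q,
            ∏ i ∈ I, ((classOf part i).card : ℤ)
          - ∑ I ∈ (Finset.univ : Finset (Fin d)).powerset.filter (fun I => I.card ≤ q),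
              ∏ i ∈ I, (((classOf part i).card : ℤ) - (r i : ℤ)) := by
  classical
  intro G hG
  set Sig := (Finset.univ \ R).powerset.filter (fun S =>
      S.card ≤ q ∧ ∀ i : Fin d, (S.filter fun v => part v = i).card ≤ 1) with hSigdef
  have hSigmem : ∀ S ∈ Sig, S ⊆ Finset.univ \ R ∧ S.card ≤ q ∧
      ∀ i : Fin d, (S.filter fun v => part v = i).card ≤ 1 := by
    intro S hS
    rw [hSigdef, Finset.mem_filter, Finset.mem_powerset] at hS
    exact ⟨hS.1, hS.2⟩
  have hSR : ∀ S ∈ Sig, ∀ x ∈ S, x ∉ R := by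
    intro S hS x hx
    exact (Finset.mem_sdiff.mp ((hSigmem S hS).1 hx)).2
  have hlam1 : ∀ S ∈ Sig, lam S ∈ mEdges part q ∧ lam S ⊆ R ∪ S ∧ S ⊆ lam S := by
    intro S hS
    obtain ⟨h1, h2⟩ := hlam S hS
    rw [indEdges, Finset.mem_filter] at h1
    exact ⟨h1.1, h1.2, h2⟩
  have hlamR : ∀ S ∈ Sig, lam S \ R = S := by
    intro S hS
    obtain ⟨_, h2, h3⟩ := hlam1 S hS
    apply Finset.Subset.antisymm
    · intro x hx
      rw [Finset.mem_sdiff] at hx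
      rcases Finset.mem_union.mp (h2 hx.1) with h | h
      · exact absurd h hx.2
      · exact h
    · intro x hx
      exact Finset.mem_sdiff.mpr ⟨h3 hx, hSR S hS x hx⟩
  have hinj : Set.InjOn lam Sig := by
    intro a ha b hb hab
    rw [← hlamR a ha, ← hlamR b hb, hab]
  have himgsub : Sig.image lam ⊆ mEdges part q := by
    intro e he
    obtain ⟨S, hS, rfl⟩ := Finset.mem_image.mp he
    exact (hlam1 S hS).1
  have hGsub : G ⊆ mEdges part q := hG ▸ Finset.sdiff_subset
  have hsd : mEdges part q \ G = Sig.image lam := by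
    rw [hG, Finset.sdiff_sdiff_self_left, Finset.inter_eq_right.mpr himgsub]
  -- cardinality
  have himgcard : (Sig.image lam).card = Sig.card := Finset.card_image_of_injOn hinj
  have hGcard : G.card = (mEdges part q).card - Sig.card := by
    rw [hG, Finset.card_sdiff_of_subset himgsub, himgcard]
  have hfibcard : ∀ i : Fin d, ((Finset.univ \ R).filter fun v => part v = i).card
      = (classOf part i).card - r i := by
    intro i
    have heq : (Finset.univ \ R).filter (fun v => part v = i)
        = classOf part i \ R.filter (fun v => part v = i) := by
      ext x
      simp only [classOf, Finset.mem_sdiff, Finset.mem_filter, Finset.mem_univ, true_and]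
      tauto
    rw [heq, Finset.card_sdiff_of_subset, hR]
    intro x hx
    rw [Finset.mem_filter] at hx
    exact Finset.mem_filter.mpr ⟨Finset.mem_univ x, hx.2⟩
  have hcardZ : (G.card : ℤ) = ∑ I ∈ (Finset.univ : Finset (Fin d)).powersetCard q,
            ∏ i ∈ I, ((classOf part i).card : ℤ)
          - ∑ I ∈ (Finset.univ : Finset (Fin d)).powerset.filter (fun I => I.card ≤ q),
              ∏ i ∈ I, (((classOf part i).card : ℤ) - (r i : ℤ)) := by
    have hle : Sig.card ≤ (mEdges part q).card := by
      rw [← himgcard]; exact Finset.card_le_card himgsub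
    rw [hGcard, Nat.cast_sub hle, mEdges_card part q, sig_card part q R]
    push_cast
    congr 1
    refine Finset.sum_congr rfl fun I hI => ?_
    refine Finset.prod_congr rfl fun i hi => ?_
    rw [hfibcard i, Nat.cast_sub (hrn i)]
  -- the ordered list of missing edges
  set le : Finset α → Finset α → Bool :=
    fun a b => decide ((a \ R).card ≤ (b \ R).card) with hledef
  set L := ((Sig.image lam).toList).mergeSort le with hLdef
  have hperm : L.Perm (Sig.image lam).toList := List.mergeSort_perm _ le
  have hnodup : L.Nodup := hperm.nodup_iff.mpr (Finset.nodup_toList _)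
  have htoF : L.toFinset = Sig.image lam := by
    rw [List.toFinset_eq_of_perm _ _ hperm, Finset.toList_toFinset]
  have hsorted : L.Pairwise (fun a b => le a b = true) := by
    rw [hLdef]
    refine List.pairwise_mergeSort ?_ ?_ _
    · intro a b c h1 h2
      simp only [hledef, decide_eq_true_eq] at *
      omega
    · intro a b
      simp only [hledef, Bool.or_eq_true, decide_eq_true_eq]
      omega
  have hkey_mono : ∀ i j : Fin L.length,
      ((L.get j) \ R).card < ((L.get i) \ R).card → (j : ℕ) < (i : ℕ) := by
    intro i j h
    by_contra hc
    push_neg at hc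
    rcases eq_or_lt_of_le hc with heq | hlt
    · have : i = j := Fin.ext heq
      rw [this] at h
      exact lt_irrefl _ h
    · have hrel := List.Pairwise.rel_get_of_lt hsorted (show i < j from hlt)
      simp only [hledef, decide_eq_true_eq] at hrel
      omega
  -- the directed copies
  have hcopy : ∀ idx : Fin L.length,
      DirCopyAt part q r (G ∪ (L.take (idx.1 + 1)).toFinset) (L.get idx) := by
    intro idx
    set e := L.get idx with he_def
    have heL : e ∈ L.toFinset := List.mem_toFinset.mpr (L.get_mem idx)
    have heimg : e ∈ Sig.image lam := htoF ▸ heL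
    obtain ⟨S0, hS0, hS0e⟩ := Finset.mem_image.mp heimg
    have hS0R : S0 = e \ R := by rw [← hS0e, hlamR S0 hS0]
    have hemE : e ∈ mEdges part q := hS0e ▸ (hlam1 S0 hS0).1
    have heRS : e ⊆ R ∪ S0 := hS0e ▸ (hlam1 S0 hS0).2.1
    have hSsub : S0 ⊆ e := hS0e ▸ (hlam1 S0 hS0).2.2
    have hSR' : ∀ x ∈ S0, x ∉ R := hSR S0 hS0
    have hefib : ∀ i : Fin d, (e.filter fun v => part v = i).card ≤ 1 := by
      have := hemE
      rw [mEdges, Finset.mem_filter] at this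
      exact this.2
    -- choice of one vertex of R in each class
    have hgex : ∀ i : Fin d, ∃ x, x ∈ R.filter (fun v => part v = i) := by
      intro i
      have hpos : 0 < (R.filter (fun v => part v = i)).card := by
        rw [hR]; exact hr1 i
      obtain ⟨x, hx⟩ := Finset.card_pos.mp hpos
      exact ⟨x, hx⟩
    set g : Fin d → α := fun i => (hgex i).choose with hgdef
    have hgmem : ∀ i, g i ∈ R ∧ part (g i) = i := by
      intro i
      have hh := (hgex i).choose_spec
      rw [Finset.mem_filter] at hh
      exact hh
    set T := (S0.image part).image g with hTdef
    set R' := (R \ T) ∪ S0 with hR'def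
    have hcount : ∀ j : Fin d, (R'.filter fun v => part v = j).card = r j := by
      intro j
      have hsplit : R'.filter (fun v => part v = j)
          = ((R.filter fun v => part v = j) \ (T.filter fun v => part v = j))
            ∪ (S0.filter fun v => part v = j) := by
        ext x
        simp only [hR'def, Finset.mem_union, Finset.mem_sdiff, Finset.mem_filter]
        tauto
      have hdisj : Disjoint
          ((R.filter fun v => part v = j) \ (T.filter fun v => part v = j))
          (S0.filter fun v => part v = j) := by
        rw [Finset.disjoint_left]
        intro x hx hx'
        exact hSR' x (Finset.mem_filter.mp hx').1
          (Finset.mem_filter.mp (Finset.mem_sdiff.mp hx).1).1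
      have hTsub : (T.filter fun v => part v = j) ⊆ (R.filter fun v => part v = j) := by
        intro x hx
        rw [Finset.mem_filter] at hx ⊢
        refine ⟨?_, hx.2⟩
        obtain ⟨i, _, rfl⟩ := Finset.mem_image.mp hx.1
        exact (hgmem i).1
      rw [hsplit, Finset.card_union_of_disjoint hdisj, Finset.card_sdiff_of_subset hTsub, hR]
      by_cases hj : j ∈ S0.image part
      · have hT1 : T.filter (fun v => part v = j) = {g j} := by
          ext x
          simp only [Finset.mem_filter, Finset.mem_singleton]
          constructor
          · rintro ⟨hxT, hxj⟩
            obtain ⟨i, _, rfl⟩ := Finset.mem_image.mp hxT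
            rw [(hgmem i).2] at hxj
            rw [hxj]
          · rintro rfl
            exact ⟨Finset.mem_image_of_mem g hj, (hgmem j).2⟩
        have hS1 : (S0.filter fun v => part v = j).card = 1 := by
          obtain ⟨s, hs, hps⟩ := Finset.mem_image.mp hj
          refine le_antisymm ((hSigmem S0 hS0).2.2 j) ?_
          exact Finset.card_pos.mpr ⟨s, Finset.mem_filter.mpr ⟨hs, hps⟩⟩
        rw [hT1, hS1, Finset.card_singleton]
        have := hr1 j
        omega
      · have hT0 : T.filter (fun v => part v = j) = ∅ := by
          rw [Finset.filter_eq_empty_iff]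
          intro x hxT
          obtain ⟨i, hi, rfl⟩ := Finset.mem_image.mp hxT
          rw [(hgmem i).2]
          intro hij
          exact hj (hij ▸ hi)
        have hS00 : (S0.filter fun v => part v = j) = ∅ := by
          rw [Finset.filter_eq_empty_iff]
          intro x hxS hpx
          exact hj (Finset.mem_image.mpr ⟨x, hxS, hpx⟩)
        rw [hT0, hS00]
        simp
    have heR' : e ⊆ R' := by
      intro x hx
      rcases Finset.mem_union.mp (heRS hx) with hxR | hxS
      · by_cases hxS' : x ∈ S0
        · exact Finset.mem_union_right _ hxS'
        · refine Finset.mem_union_left _ (Finset.mem_sdiff.mpr ⟨hxR, ?_⟩)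
          intro hxT
          obtain ⟨i, hi, hgi⟩ := Finset.mem_image.mp hxT
          obtain ⟨s, hs, hps⟩ := Finset.mem_image.mp hi
          have h1 : x ∈ e.filter (fun v => part v = i) :=
            Finset.mem_filter.mpr ⟨hx, by rw [← hgi, (hgmem i).2]⟩
          have h2 : s ∈ e.filter (fun v => part v = i) :=
            Finset.mem_filter.mpr ⟨hSsub hs, hps⟩
          have hxs := Finset.card_le_one.mp (hefib i) x h1 s h2
          exact hxS' (hxs ▸ hs)
      · exact Finset.mem_union_right _ hxS
    have hsubset : indEdges part q R' ⊆ G ∪ (L.take (idx.1 + 1)).toFinset := by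
      intro e' he'
      rw [indEdges, Finset.mem_filter] at he'
      by_cases hG' : e' ∈ G
      · exact Finset.mem_union_left _ hG'
      · have he'img : e' ∈ Sig.image lam := by
          rw [← hsd]; exact Finset.mem_sdiff.mpr ⟨he'.1, hG'⟩
        obtain ⟨S', hS', hS'e⟩ := Finset.mem_image.mp he'img
        have hS'R : S' = e' \ R := by rw [← hS'e, hlamR S' hS']
        have hS'S : S' ⊆ S0 := by
          intro x hx
          rw [hS'R, Finset.mem_sdiff] at hx
          rcases Finset.mem_union.mp (he'.2 hx.1) with h | h
          · exact absurd (Finset.mem_sdiff.mp h).1 hx.2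
          · exact h
        refine Finset.mem_union_right _ ?_
        rw [List.mem_toFinset]
        by_cases heq : S' = S0
        · have hee : e' = e := by rw [← hS'e, heq, hS0e]
          have hlen : (idx : ℕ) < (L.take (idx.1 + 1)).length := by
            rw [List.length_take]
            exact lt_min (Nat.lt_succ_self _) idx.2
          have hget : (L.take (idx.1 + 1))[(idx : ℕ)] = L.get idx :=
            List.getElem_take
          rw [hee, he_def, ← hget]
          exact List.getElem_mem hlen
        · have hss : S' ⊂ S0 := HasSubset.Subset.ssubset_of_ne hS'S heq
          have hlt : (e' \ R).card < (e \ R).card := by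
            rw [← hS'R, ← hS0R]
            exact Finset.card_lt_card hss
          have he'L : e' ∈ L := by
            rw [← List.mem_toFinset, htoF]; exact he'img
          obtain ⟨j, hj⟩ := List.mem_iff_get.mp he'L
          have hjlt : (j : ℕ) < (idx : ℕ) := by
            apply hkey_mono idx j
            rw [hj, ← he_def]
            exact hlt
          have hlen : (j : ℕ) < (L.take (idx.1 + 1)).length := by
            rw [List.length_take]
            exact lt_min (by omega) j.2
          have hget : (L.take (idx.1 + 1))[(j : ℕ)] = L.get j :=
            List.getElem_take
          rw [← hj, ← hget]
          exact List.getElem_mem hlen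
    refine ⟨R', hcount, ?_, hsubset⟩
    rw [indEdges, Finset.mem_filter]
    exact ⟨hemE, heR'⟩
  have hsat : DirWeaklySat part q r G :=
    ⟨hGsub, L, hnodup, htoF.trans hsd.symm, hcopy⟩
  refine ⟨hsat, hcardZ, ?_⟩
  calc (mwsat part q r : ℤ) ≤ (G.card : ℤ) :=
        Nat.cast_le.mpr (Nat.sInf_le ⟨G, hsat, rfl⟩)
    _ = _ := hcardZ
end

section
/- Let N = N_1 ⊔ … ⊔ N_d be a partitioned vertex set with |N_i| = n_i ≥ r_i, let V = ℝ^N with standard basis (e_v)_{v∈N}, and let span K^q_n ⊆ ⋀^q V be the span of {e_T : T an edge of K^q_n}. Let Y be a real vector space and Γ : span K^q_n → Y a linear map such that for every subset R ⊆ N with |R ∩ N_i| = r_i for all i ∈ [d] there exists m ∈ ker Γ with supp(m) = E(K^q_n[R]). Then mwsat(K^q_n, K^q_r) ≥ rank Γ. -/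
open Finset

/-- The basis element `e_T` of `⋀V` (for `V = ℝ^N`), modelled as the function
`Finset α → ℝ` which is `1` at `T` and `0` elsewhere. -/
noncomputable def eB {α : Type*} [DecidableEq α] (T : Finset α) : Finset α → ℝ :=
  fun S => if S = T then 1 else 0

/-- The subspace `span K^q_n ⊆ ⋀^q V` spanned by the `e_T` for edges `T` of `K^q_n`. -/
noncomputable def spanK {α : Type*} [Fintype α] [DecidableEq α] {d : ℕ} (part : α → Fin d)
    (q : ℕ) : Submodule ℝ (Finset α → ℝ) :=
  Submodule.span ℝ {x : Finset α → ℝ | ∃ T ∈ mEdges part q, x = eB T}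

/-!
Let `G` be directed weakly saturated and `f T := Γ e_T`. A kernel element supported exactly on
the edges of a copy `K^q_n[R]` is a linear relation among the `f T`, `T ∈ E(K^q_n[R])`, with all
coefficients nonzero. So whenever a saturating step adds an edge `e` completing such a copy, `f e`
lies in the span of the `f T` for the edges present before. Along the whole sequence every `f T`
lies in the span of `f '' G`, and these vectors span the range of `Γ`, whence
`rank Γ ≤ |G|`.
-/

open Submodule

theorem List.mem_take_of_mem_take_succ {β : Type*} {L : List β} {i : ℕ} {x : β}
    (hi : i < L.length) (hx : x ∈ L.take (i + 1)) (hne : x ≠ L[i]) : x ∈ L.take i := by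
  rw [List.take_add_one, List.getElem?_eq_getElem hi, Option.toList_some, List.mem_append,
    List.mem_singleton] at hx
  exact hx.resolve_right hne

theorem List.forall_mem_of_forall_take_imp {β : Type*} {L : List β} {P : β → Prop}
    (h : ∀ i : Fin L.length, (∀ x ∈ L.take i, P x) → P (L.get i)) : ∀ x ∈ L, P x := by
  suffices ∀ j, ∀ x ∈ L.take j, P x from fun x hx => this L.length x (by simpa using hx)
  intro j
  induction j with
  | zero => simp
  | succ j ih =>
    intro x hx
    rw [List.take_add_one, List.mem_append] at hx
    rcases hx with hx | hx
    · exact ih x hx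
    · obtain ⟨hj, rfl⟩ := List.getElem?_eq_some_iff.mp (Option.mem_toList.mp hx)
      exact h ⟨j, hj⟩ ih

theorem Submodule.mem_of_sum_smul_eq_zero {K M ι : Type*} [DivisionRing K] [AddCommGroup M]
    [Module K M] [DecidableEq ι] {W : Submodule K M} {s : Finset ι} {c : ι → K} {f : ι → M}
    (hsum : ∑ i ∈ s, c i • f i = 0) {e : ι} (he : e ∈ s) (hce : c e ≠ 0)
    (hW : ∀ i ∈ s, i ≠ e → f i ∈ W) : f e ∈ W := by
  have hsplit : c e • f e = -∑ i ∈ s.erase e, c i • f i :=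
    eq_neg_of_add_eq_zero_left (by rwa [Finset.add_sum_erase s (fun i => c i • f i) he])
  rw [← smul_mem_iff W hce, hsplit]
  exact W.neg_mem <| W.sum_mem fun i hi =>
    W.smul_mem _ (hW i (Finset.mem_of_mem_erase hi) (Finset.ne_of_mem_erase hi))

section Saturation

variable {α : Type*} [Fintype α] [DecidableEq α] {d : ℕ} {part : α → Fin d} {q : ℕ}
  {r : Fin d → ℕ}

theorem dirWeaklySat_mEdges : DirWeaklySat part q r (mEdges part q) :=
  ⟨subset_rfl, [], List.nodup_nil, by simp, fun i => i.elim0⟩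

theorem le_mwsat {k : ℕ} (h : ∀ G, DirWeaklySat part q r G → k ≤ G.card) :
    k ≤ mwsat part q r :=
  le_csInf ⟨_, _, dirWeaklySat_mEdges, rfl⟩ fun _ ⟨G, hG, hcard⟩ => hcard ▸ h G hG

theorem DirWeaklySat.mem_span_image {K M : Type*} [DivisionRing K] [AddCommGroup M] [Module K M]
    {G : Finset (Finset α)} (hG : DirWeaklySat part q r G) (f : Finset α → M)
    (hrel : ∀ R : Finset α, (∀ i : Fin d, (R.filter fun v => part v = i).card = r i) →
      ∃ c : Finset α → K, (∀ S ∈ indEdges part q R, c S ≠ 0) ∧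
        ∑ S ∈ indEdges part q R, c S • f S = 0) :
    ∀ T ∈ mEdges part q, f T ∈ span K (f '' G) := by
  obtain ⟨-, L, -, hL, hsat⟩ := hG
  have hG_mem : ∀ T ∈ G, f T ∈ span K (f '' G) := fun T hT => subset_span ⟨T, hT, rfl⟩
  have hL_mem : ∀ T ∈ L, f T ∈ span K (f '' G) := by
    refine List.forall_mem_of_forall_take_imp fun i hprev => ?_
    obtain ⟨R, hR, heR, hRG⟩ := hsat i
    obtain ⟨c, hc, hsum⟩ := hrel R hR
    refine mem_of_sum_smul_eq_zero hsum heR (hc _ heR) fun S hS hne => ?_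
    rcases Finset.mem_union.mp (hRG hS) with hSG | hSL
    · exact hG_mem S hSG
    · exact hprev S (List.mem_take_of_mem_take_succ i.2 (List.mem_toFinset.mp hSL) hne)
  intro T hT
  by_cases hTG : T ∈ G
  · exact hG_mem T hTG
  · exact hL_mem T (List.mem_toFinset.mp (hL ▸ Finset.mem_sdiff.mpr ⟨hT, hTG⟩))

end Saturation

/-- `e_T` as an element of `span K^q_n`, with junk value `0` when `T` is not an edge. -/
noncomputable def edgeVec {α : Type*} [Fintype α] [DecidableEq α] {d : ℕ} (part : α → Fin d)
    (q : ℕ) (T : Finset α) : spanK part q :=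
  if h : T ∈ mEdges part q then ⟨eB T, subset_span ⟨T, h, rfl⟩⟩ else 0

theorem eq_sum_smul_eB {α : Type*} [DecidableEq α] {m : Finset α → ℝ} {s : Finset (Finset α)}
    (hm : ∀ S, m S ≠ 0 → S ∈ s) : m = ∑ S ∈ s, m S • eB S := by
  funext S
  simp only [Finset.sum_apply, Pi.smul_apply, eB, smul_eq_mul, mul_ite, mul_one, mul_zero,
    Finset.sum_ite_eq]
  split_ifs with hS
  · rfl
  · exact not_not.mp (mt (hm S) hS)

section EdgeVectors

variable {α : Type*} [Fintype α] [DecidableEq α] {d : ℕ} {part : α → Fin d} {q : ℕ}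

theorem coe_edgeVec {T : Finset α} (hT : T ∈ mEdges part q) :
    (edgeVec part q T : Finset α → ℝ) = eB T := by
  simp [edgeVec, hT]

theorem span_image_edgeVec : span ℝ (edgeVec part q '' mEdges part q) = ⊤ := by
  suffices edgeVec part q '' mEdges part q = (↑) ⁻¹' {x | ∃ T ∈ mEdges part q, x = eB T} by
    rw [this]
    exact span_span_coe_preimage
  ext x
  constructor
  · rintro ⟨T, hT, rfl⟩
    exact ⟨T, hT, coe_edgeVec hT⟩
  · rintro ⟨T, hT, hx⟩
    exact ⟨T, hT, Subtype.ext ((coe_edgeVec hT).trans hx.symm)⟩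

theorem mk_eq_sum_smul_edgeVec {m : Finset α → ℝ} (hm : m ∈ spanK part q)
    {s : Finset (Finset α)} (hs : s ⊆ mEdges part q) (hsupp : ∀ S, m S ≠ 0 → S ∈ s) :
    (⟨m, hm⟩ : spanK part q) = ∑ S ∈ s, m S • edgeVec part q S := by
  ext1
  rw [Submodule.coe_sum]
  refine (eq_sum_smul_eB hsupp).trans (Finset.sum_congr rfl fun S hS => ?_)
  rw [Submodule.coe_smul, coe_edgeVec (hs hS)]

variable {Y : Type*} [AddCommGroup Y] [Module ℝ Y] (Γ : spanK part q →ₗ[ℝ] Y)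

theorem range_eq_span_image_edgeVec :
    LinearMap.range Γ = span ℝ ((Γ ∘ edgeVec part q) '' mEdges part q) := by
  rw [LinearMap.range_eq_map, ← span_image_edgeVec, map_span, Set.image_comp]

theorem sum_smul_map_edgeVec_eq_zero {m : Finset α → ℝ} {hm : m ∈ spanK part q}
    (hΓm : Γ ⟨m, hm⟩ = 0) {s : Finset (Finset α)} (hs : s ⊆ mEdges part q)
    (hsupp : ∀ S, m S ≠ 0 → S ∈ s) : ∑ S ∈ s, m S • Γ (edgeVec part q S) = 0 := by
  simp_rw [← map_smul, ← map_sum, ← mk_eq_sum_smul_edgeVec hm hs hsupp, hΓm]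

end EdgeVectors

theorem mwsat_ge_rank_general {α : Type*} [Fintype α] [DecidableEq α] {d q : ℕ} (part : α → Fin d)
    (r : Fin d → ℕ)
    (Y : Type*) [AddCommGroup Y] [Module ℝ Y]
    (Γ : ↥(spanK part q) →ₗ[ℝ] Y)
    (hΓ : ∀ R : Finset α, (∀ i : Fin d, (R.filter fun v => part v = i).card = r i) →
      ∃ (m : Finset α → ℝ) (hm : m ∈ spanK part q),
        Γ ⟨m, hm⟩ = 0 ∧ ∀ S : Finset α, m S ≠ 0 ↔ S ∈ indEdges part q R) :
    Module.finrank ℝ ↥(LinearMap.range Γ) ≤ mwsat part q r := by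
  classical
  refine le_mwsat fun G hG => ?_
  set f := Γ ∘ edgeVec part q
  have hspan : ∀ T ∈ mEdges part q, f T ∈ span ℝ (f '' G) :=
    hG.mem_span_image f fun R hR => by
      obtain ⟨m, hm, hΓm, hsupp⟩ := hΓ R hR
      exact ⟨m, fun S hS => (hsupp S).2 hS,
        sum_smul_map_edgeVec_eq_zero Γ hΓm (filter_subset _ _) fun S => (hsupp S).1⟩
  have hrange : LinearMap.range Γ ≤ span ℝ (G.image f : Set Y) := by
    rw [range_eq_span_image_edgeVec, Finset.coe_image, span_le]
    rintro _ ⟨T, hT, rfl⟩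
    exact hspan T hT
  calc Module.finrank ℝ (LinearMap.range Γ)
      ≤ Module.finrank ℝ (span ℝ (G.image f : Set Y)) := Submodule.finrank_mono hrange
    _ ≤ (G.image f).card := finrank_span_finset_le_card _
    _ ≤ G.card := Finset.card_image_le

/-- Lemma 4.1: if `Γ : span K^q_n → Y` is a linear map such that for every `R ⊆ N` with
`|R ∩ N_i| = r_i` for all `i` there is an `m ∈ ker Γ` with `supp(m) = E(K^q_n[R])`,
then `mwsat(K^q_n, K^q_r) ≥ rank Γ`. -/
theorem mwsat_ge_rank {α : Type*} [Fintype α] [DecidableEq α] {d q : ℕ} (part : α → Fin d)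
    (r : Fin d → ℕ) (hrn : ∀ i, r i ≤ (classOf part i).card)
    (Y : Type*) [AddCommGroup Y] [Module ℝ Y]
    (Γ : ↥(spanK part q) →ₗ[ℝ] Y)
    (hΓ : ∀ R : Finset α, (∀ i : Fin d, (R.filter fun v => part v = i).card = r i) →
      ∃ (m : Finset α → ℝ) (hm : m ∈ spanK part q),
        Γ ⟨m, hm⟩ = 0 ∧ ∀ S : Finset α, m S ≠ 0 ↔ S ∈ indEdges part q R) :
    Module.finrank ℝ ↥(LinearMap.range Γ) ≤ mwsat part q r :=
  mwsat_ge_rank_general part r Y Γ hΓ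
end

section
/- Let H = K^d_{r_1,…,r_d} and let F^d_n denote the copy of K^d(n;d), the complete d-partite d-graph between the vertex sets [n]×{1},…,[n]×{d}. Then there exists a d-graph E^d(n,H) ⊆ F^d_n ∖ (K^d_{[n]} × K^d_{[d]}) of size O_H(n^{d−2}) such that G(n,H) := (K^d_{[n]} × K^d_{[d]}) ⊔ E^d(n,H) is weakly H-saturated in F^d_n. -/
open Finset

/-- `G` contains an isomorphic copy of the `q`-graph `H` which contains the edge `e`. -/
def edgeCopyAt {α β : Type*} [DecidableEq α] [DecidableEq β]
    (G : Finset (Finset α)) (H : Finset (Finset β)) (e : Finset α) : Prop :=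
  ∃ φ : β ↪ α, (∀ h ∈ H, h.image φ ∈ G) ∧ ∃ h ∈ H, h.image φ = e

/-- `G` is weakly `H`-saturated in `F`. -/
def WeaklySat {α β : Type*} [DecidableEq α] [DecidableEq β]
    (F G : Finset (Finset α)) (H : Finset (Finset β)) : Prop :=
  G ⊆ F ∧ ∃ L : List (Finset α), L.Nodup ∧ L.toFinset = F \ G ∧
    ∀ i : Fin L.length, edgeCopyAt (G ∪ (L.take (i.1 + 1)).toFinset) H (L.get i)

/-- The complete `q`-graph on `n` vertices. -/
def completeQ (q n : ℕ) : Finset (Finset (Fin n)) := Finset.univ.powersetCard q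

/-- The complete `d`-partite `q`-graph on `[n] × [d]` whose parts are the `[n] × {i}`. -/
def multiProd (n d q : ℕ) : Finset (Finset (Fin n × Fin d)) :=
  (Finset.univ.powersetCard q).filter fun e => ∀ i : Fin d, (e.filter fun v => v.2 = i).card ≤ 1

/-- The complete `d`-partite `q`-graph `K^q_{r_1,…,r_d}` with parts of sizes `r 1, …, r d`. -/
def multiSigma (d q : ℕ) (r : Fin d → ℕ) : Finset (Finset (Σ i : Fin d, Fin (r i))) :=
  (Finset.univ.powersetCard q).filter fun e => ∀ i : Fin d, (e.filter fun v => v.1 = i).card ≤ 1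

/-- The tensor product of two `q`-graphs: edges are `{(v_1,w_1),…,(v_q,w_q)}` with
`{v_1,…,v_q}` an edge of `G` and `{w_1,…,w_q}` an edge of `J`. -/
def tensorG {α β : Type*} [DecidableEq α] [DecidableEq β]
    (G : Finset (Finset α)) (J : Finset (Finset β)) : Finset (Finset (α × β)) :=
  ((G.sup id ×ˢ J.sup id).powerset).filter fun e =>
    e.image Prod.fst ∈ G ∧ e.image Prod.snd ∈ J ∧
      (e.image Prod.fst).card = e.card ∧ (e.image Prod.snd).card = e.card

section Aux

theorem edgeCopyAt_mono {α β : Type*} [DecidableEq α] [DecidableEq β]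
    {G G' : Finset (Finset α)} {H : Finset (Finset β)} {e : Finset α}
    (hGG : G ⊆ G') (h : edgeCopyAt G H e) : edgeCopyAt G' H e := by
  obtain ⟨φ, h1, h2⟩ := h
  exact ⟨φ, fun h hh => hGG (h1 h hh), h2⟩

theorem weaklySat_of_rank {α β : Type*} [DecidableEq α] [DecidableEq β]
    (F G : Finset (Finset α)) (H : Finset (Finset β)) (rk : Finset α → ℕ)
    (hGF : G ⊆ F)
    (key : ∀ e ∈ F \ G,
      edgeCopyAt (G ∪ (F \ G).filter (fun x => rk x < rk e) ∪ {e}) H e) :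
    WeaklySat F G H := by
  classical
  refine ⟨hGF, ?_⟩
  set le : Finset α → Finset α → Bool := fun x y => decide (rk x ≤ rk y) with hle
  set L := (F \ G).toList.mergeSort le with hL
  have hperm : L.Perm (F \ G).toList := List.mergeSort_perm _ _
  have hnd : L.Nodup := hperm.nodup_iff.mpr (Finset.nodup_toList _)
  have htf : L.toFinset = F \ G := by
    rw [List.toFinset_eq_of_perm _ _ hperm, Finset.toList_toFinset]
  have hsorted : List.Pairwise (fun a b => le a b = true) L :=
    List.pairwise_mergeSort (by intro a b c; simp only [hle, decide_eq_true_eq]; omega)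
      (by intro a b; simp only [hle, Bool.or_eq_true, decide_eq_true_eq]; omega) _
  refine ⟨L, hnd, htf, ?_⟩
  intro i
  have hei : L.get i ∈ F \ G := by rw [← htf]; exact List.mem_toFinset.mpr (L.get_mem i)
  refine edgeCopyAt_mono ?_ (key _ hei)
  intro x hx
  simp only [Finset.mem_union, Finset.mem_singleton] at hx ⊢
  have hmemtake : ∀ j : Fin L.length, j.1 ≤ i.1 → L.get j ∈ (L.take (i.1 + 1)).toFinset := by
    intro j hj
    rw [List.mem_toFinset]
    have : (L.take (i.1+1))[j.1]'(by rw [List.length_take]; exact lt_min (by omega) j.2) =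
        L.get j := by
      simp [List.getElem_take]
    rw [← this]
    exact List.getElem_mem _
  rcases hx with (hx | hx) | hx
  · exact Or.inl hx
  · right
    simp only [Finset.mem_filter] at hx
    have hxL : x ∈ L := by rw [← List.mem_toFinset, htf]; exact hx.1
    obtain ⟨j, hj⟩ := List.mem_iff_get.mp hxL
    by_cases hji : j.1 ≤ i.1
    · rw [← hj]; exact hmemtake j hji
    · exfalso
      have := (List.pairwise_iff_get.mp hsorted) i j (by omega)
      rw [hj] at this
      simp only [hle, decide_eq_true_eq] at this
      omega
  · subst hx
    exact Or.inr (hmemtake i le_rfl)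

variable {n d : ℕ}

def emb (a : Fin d → Fin n) : Finset (Fin n × Fin d) := univ.image fun j => (a j, j)

lemma emb_inj_fun (a : Fin d → Fin n) : Function.Injective fun j : Fin d => (a j, j) := by
  intro i k h; exact congrArg Prod.snd h

lemma emb_card (a : Fin d → Fin n) : (emb a).card = d := by
  rw [emb, Finset.card_image_of_injective _ (emb_inj_fun a)]; simp

lemma mem_emb {a : Fin d → Fin n} {v : Fin n × Fin d} : v ∈ emb a ↔ v.1 = a v.2 := by
  constructor
  · rintro hv
    simp only [emb, Finset.mem_image, Finset.mem_univ, true_and] at hv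
    obtain ⟨j, hj⟩ := hv
    have h2 : j = v.2 := congrArg Prod.snd hj
    subst h2
    exact (congrArg Prod.fst hj).symm
  · intro hv
    simp only [emb, Finset.mem_image, Finset.mem_univ, true_and]
    exact ⟨v.2, by rw [← hv]⟩

lemma emb_image_fst (a : Fin d → Fin n) : (emb a).image Prod.fst = univ.image a := by
  rw [emb, Finset.image_image]; rfl

lemma emb_image_snd (a : Fin d → Fin n) : (emb a).image Prod.snd = univ := by
  rw [emb, Finset.image_image]
  exact Finset.image_id

lemma sum_emb (a : Fin d → Fin n) : ∑ v ∈ emb a, (v.1 : ℕ) = ∑ j, (a j : ℕ) := by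
  rw [emb, Finset.sum_image (fun x _ y _ h => emb_inj_fun a h)]

lemma emb_mem_multiProd (a : Fin d → Fin n) : emb a ∈ multiProd n d d := by
  rw [multiProd, Finset.mem_filter]
  refine ⟨Finset.mem_powersetCard_univ.mpr (emb_card a), fun i => ?_⟩
  refine Finset.card_le_one.mpr (fun v hv w hw => ?_)
  simp only [Finset.mem_filter] at hv hw
  have h1 := mem_emb.mp hv.1
  have h2 := mem_emb.mp hw.1
  have : v.2 = w.2 := hv.2.trans hw.2.symm
  exact Prod.ext (by rw [h1, h2, this]) this

lemma exists_emb_of_mem_multiProd {e : Finset (Fin n × Fin d)} (he : e ∈ multiProd n d d) :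
    ∃ a : Fin d → Fin n, e = emb a := by
  rw [multiProd, Finset.mem_filter, Finset.mem_powersetCard_univ] at he
  obtain ⟨hcard, hfib⟩ := he
  have hsum : e.card = ∑ i : Fin d, (e.filter fun v => v.2 = i).card :=
    Finset.card_eq_sum_card_fiberwise (fun x _ => Finset.mem_univ _)
  have hone : ∀ i : Fin d, (e.filter fun v => v.2 = i).card = 1 := by
    have hsum2 : ∑ i : Fin d, (e.filter fun v => v.2 = i).card = ∑ _i : Fin d, 1 := by
      rw [← hsum, hcard]; simp
    intro i
    exact le_antisymm (hfib i)
      (Nat.one_le_iff_ne_zero.mpr (by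
        intro h0
        have := (Finset.sum_eq_sum_iff_of_le (fun i _ => hfib i)).mp hsum2 i (Finset.mem_univ i)
        omega))
  have hex : ∀ j : Fin d, ∃ u : Fin n, (u, j) ∈ e := by
    intro j
    obtain ⟨v, hv⟩ := Finset.card_eq_one.mp (hone j)
    have hvm : v ∈ e.filter fun w => w.2 = j := hv ▸ Finset.mem_singleton_self v
    simp only [Finset.mem_filter] at hvm
    exact ⟨v.1, by rw [show (v.1, j) = v from Prod.ext rfl hvm.2.symm]; exact hvm.1⟩
  choose a ha using hex
  refine ⟨a, (Finset.eq_of_subset_of_card_le (fun v hv => ?_) (by rw [emb_card, hcard])).symm⟩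
  rw [mem_emb] at hv
  rw [show v = (a v.2, v.2) from Prod.ext hv rfl]
  exact ha v.2

lemma univ_mem_completeQ : (univ : Finset (Fin d)) ∈ completeQ d d := by
  rw [completeQ, Finset.mem_powersetCard_univ]; simp

lemma emb_mem_tensor_iff (a : Fin d → Fin n) :
    emb a ∈ tensorG (completeQ d n) (completeQ d d) ↔ Function.Injective a := by
  constructor
  · intro h
    rw [tensorG, Finset.mem_filter] at h
    have hc := h.2.2.2.1
    rw [emb_image_fst, emb_card] at hc
    have : (univ.image a).card = (univ : Finset (Fin d)).card := by rw [hc]; simp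
    exact Set.injOn_univ.mp (by simpa using Finset.card_image_iff.mp this)
  · intro hinj
    have himg : univ.image a ∈ completeQ d n := by
      rw [completeQ, Finset.mem_powersetCard_univ, Finset.card_image_of_injective _ hinj]; simp
    rw [tensorG, Finset.mem_filter]
    refine ⟨Finset.mem_powerset.mpr ?_, ?_, ?_, ?_, ?_⟩
    · intro v hv
      rw [mem_emb] at hv
      rw [Finset.mem_product]
      constructor
      · exact Finset.le_sup (f := id) himg (hv ▸ Finset.mem_image_of_mem a (Finset.mem_univ v.2))
      · exact Finset.le_sup (f := id) univ_mem_completeQ (Finset.mem_univ v.2)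
    · rw [emb_image_fst]; exact himg
    · rw [emb_image_snd]; exact univ_mem_completeQ
    · rw [emb_image_fst, emb_card, Finset.card_image_of_injective _ hinj]; simp
    · rw [emb_image_snd, emb_card]; simp

lemma tensor_subset_multiProd :
    tensorG (completeQ d n) (completeQ d d) ⊆ multiProd n d d := by
  intro e he
  rw [tensorG, Finset.mem_filter] at he
  obtain ⟨-, -, hsnd, -, hsc⟩ := he
  have hcard : e.card = d := by
    rw [completeQ, Finset.mem_powersetCard_univ] at hsnd
    rw [← hsc, hsnd]
  rw [multiProd, Finset.mem_filter, Finset.mem_powersetCard_univ]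
  refine ⟨hcard, fun i => Finset.card_le_one.mpr (fun v hv w hw => ?_)⟩
  simp only [Finset.mem_filter] at hv hw
  have hinj := Finset.card_image_iff.mp hsc
  exact hinj hv.1 hw.1 (hv.2.trans hw.2.symm)

variable {r : Fin d → ℕ}

def sig (s : ∀ i : Fin d, Fin (r i)) : Finset (Σ i : Fin d, Fin (r i)) :=
  univ.image fun i => ⟨i, s i⟩

lemma sig_inj_fun (s : ∀ i : Fin d, Fin (r i)) :
    Function.Injective (fun i => (⟨i, s i⟩ : Σ i : Fin d, Fin (r i))) := by
  intro i k h; exact congrArg Sigma.fst h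

lemma sig_card_s15 (s : ∀ i : Fin d, Fin (r i)) : (sig s).card = d := by
  rw [sig, Finset.card_image_of_injective _ (sig_inj_fun s)]; simp

lemma mem_sig {s : ∀ i : Fin d, Fin (r i)} {v : Σ i : Fin d, Fin (r i)} :
    v ∈ sig s ↔ v = ⟨v.1, s v.1⟩ := by
  constructor
  · intro hv
    simp only [sig, Finset.mem_image, Finset.mem_univ, true_and] at hv
    obtain ⟨i, hi⟩ := hv
    subst hi
    rfl
  · intro hv
    rw [hv, sig, Finset.mem_image]
    exact ⟨v.1, Finset.mem_univ _, rfl⟩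

lemma sig_mem_multiSigma (s : ∀ i : Fin d, Fin (r i)) : sig s ∈ multiSigma d d r := by
  rw [multiSigma, Finset.mem_filter]
  refine ⟨Finset.mem_powersetCard_univ.mpr (sig_card_s15 s), fun i => ?_⟩
  refine Finset.card_le_one.mpr (fun v hv w hw => ?_)
  simp only [Finset.mem_filter] at hv hw
  rw [mem_sig.mp hv.1, mem_sig.mp hw.1]
  rw [hv.2.trans hw.2.symm]

lemma exists_sig_of_mem_multiSigma {h : Finset (Σ i : Fin d, Fin (r i))}
    (hh : h ∈ multiSigma d d r) : ∃ s : ∀ i : Fin d, Fin (r i), h = sig s := by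
  rw [multiSigma, Finset.mem_filter, Finset.mem_powersetCard_univ] at hh
  obtain ⟨hcard, hfib⟩ := hh
  have hsum : h.card = ∑ i : Fin d, (h.filter fun v => v.1 = i).card :=
    Finset.card_eq_sum_card_fiberwise (fun x _ => Finset.mem_univ _)
  have hone : ∀ i : Fin d, (h.filter fun v => v.1 = i).card = 1 := by
    have hsum2 : ∑ i : Fin d, (h.filter fun v => v.1 = i).card = ∑ _i : Fin d, 1 := by
      rw [← hsum, hcard]; simp
    intro i
    exact le_antisymm (hfib i)
      (Nat.one_le_iff_ne_zero.mpr (by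
        intro h0
        have := (Finset.sum_eq_sum_iff_of_le (fun i _ => hfib i)).mp hsum2 i (Finset.mem_univ i)
        omega))
  have hex : ∀ i : Fin d, ∃ t : Fin (r i), (⟨i, t⟩ : Σ i, Fin (r i)) ∈ h := by
    intro i
    obtain ⟨v, hv⟩ := Finset.card_eq_one.mp (hone i)
    have hvm : v ∈ h.filter fun w => w.1 = i := hv ▸ Finset.mem_singleton_self v
    simp only [Finset.mem_filter] at hvm
    obtain ⟨⟨i', t⟩, hti⟩ : ∃ w : Σ i, Fin (r i), w = v := ⟨v, rfl⟩
    obtain ⟨hm, hi⟩ : (⟨i', t⟩ : Σ i, Fin (r i)) ∈ h ∧ (⟨i', t⟩ : Σ i, Fin (r i)).1 = i := by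
      rw [hti]; exact hvm
    simp only at hi
    subst hi
    exact ⟨t, hm⟩
  choose s hs using hex
  refine ⟨s, (Finset.eq_of_subset_of_card_le (fun v hv => ?_) (by rw [sig_card_s15, hcard])).symm⟩
  rw [mem_sig] at hv
  rw [hv]
  exact hs v.1

def decode (n d R : ℕ) (w : (Fin d × Fin d × Fin d × Fin R) × (Fin d → Fin n)) :
    (Fin d → Fin n) × Fin n × Fin n :=
  let j := w.1.1
  let k := w.1.2.1
  let m := w.1.2.2.1
  let v := w.1.2.2.2
  let f := w.2
  let v' : Fin n := if h : (v : ℕ) < n then ⟨v, h⟩ else f j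
  let p : Fin d := if m = j then k else m
  let wv : Fin n := if k = m then v' else f k
  (fun i => if i = m then v' else if i = j then wv else if m = j ∧ i = k then v' else f i,
   f j, f p)

lemma decode_surj (n d R : ℕ) :
    Set.SurjOn (decode n d R) ↑(univ : Finset ((Fin d × Fin d × Fin d × Fin R) × (Fin d → Fin n)))
      ↑((univ.filter (fun a : Fin d → Fin n =>
          (∃ j k, j ≠ k ∧ a j = a k) ∧ ∃ m, (a m : ℕ) < R)) ×ˢ
        (univ : Finset (Fin n)) ×ˢ (univ : Finset (Fin n))) := by
  rintro ⟨a, x, y⟩ hmem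
  simp only [Finset.coe_product, Set.mem_prod, Finset.mem_coe, Finset.mem_filter] at hmem
  obtain ⟨⟨-, ⟨j, k, hjk, hajk⟩, m, hm⟩, -, -⟩ := hmem
  have hmn : (a m : ℕ) < n := (a m).2
  set p : Fin d := if m = j then k else m with hp
  have hpj : p ≠ j := by
    rw [hp]; split_ifs with h
    · exact fun hkj => hjk hkj.symm
    · exact h
  set f : Fin d → Fin n := Function.update (Function.update a j x) p y with hf
  have hfj : f j = x := by
    rw [hf, Function.update_of_ne (Ne.symm hpj), Function.update_self]
  have hfp : f p = y := by rw [hf, Function.update_self]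
  have hfother : ∀ i, i ≠ j → i ≠ p → f i = a i := by
    intro i h1 h2
    rw [hf, Function.update_of_ne h2, Function.update_of_ne h1]
  refine ⟨⟨⟨j, k, m, ⟨(a m : ℕ), hm⟩⟩, f⟩, Finset.mem_coe.mpr (Finset.mem_univ _), ?_⟩
  have hv' : (if h : ((⟨(a m : ℕ), hm⟩ : Fin R) : ℕ) < n
      then (⟨((⟨(a m : ℕ), hm⟩ : Fin R) : ℕ), h⟩ : Fin n) else f j) = a m := by
    rw [dif_pos hmn]
  simp only [decode]
  refine Prod.ext ?_ (Prod.ext ?_ ?_)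
  · funext i
    simp only [hv']
    by_cases h1 : i = m
    · rw [if_pos h1, h1]
    · rw [if_neg h1]
      by_cases h2 : i = j
      · rw [if_pos h2]
        by_cases h3 : k = m
        · rw [if_pos h3, ← h3, ← hajk, h2]
        · have hmj : m ≠ j := fun hmj => h1 (h2.trans hmj.symm)
          have hkp : k ≠ p := by rw [hp, if_neg hmj]; exact h3
          rw [if_neg h3, hfother k (Ne.symm hjk) hkp, ← hajk, h2]
      · rw [if_neg h2]
        by_cases h3 : m = j ∧ i = k
        · rw [if_pos h3, h3.1, hajk, ← h3.2]
        · rw [if_neg h3]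
          refine hfother i h2 ?_
          rw [hp]
          split_ifs with h4
          · exact fun hik => h3 ⟨h4, hik⟩
          · exact h1
  · simpa using hfj
  · simpa using hfp

lemma count_bound (n d R : ℕ) :
    (univ.filter (fun a : Fin d → Fin n =>
      (∃ j k, j ≠ k ∧ a j = a k) ∧ ∃ m, (a m : ℕ) < R)).card * (n * n) ≤
    d * d * d * R * n ^ d := by
  classical
  have h := Finset.card_le_card_of_surjOn (decode n d R) (decode_surj n d R)
  rw [Finset.card_product, Finset.card_product] at h
  simp only [Finset.card_univ, Fintype.card_fin, Fintype.card_prod, Fintype.card_fun] at h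
  calc (univ.filter (fun a : Fin d → Fin n =>
      (∃ j k, j ≠ k ∧ a j = a k) ∧ ∃ m, (a m : ℕ) < R)).card * (n * n)
      ≤ d * (d * (d * R)) * n ^ d := by exact_mod_cast h.trans_eq (by ring)
    _ = d * d * d * R * n ^ d := by ring

lemma pow_split (n d : ℕ) (hd : 2 ≤ d) : n ^ d = n ^ (d - 2) * (n * n) := by
  have h2 : d - 2 + 2 = d := by omega
  calc n ^ d = n ^ (d - 2 + 2) := by rw [h2]
    _ = n ^ (d - 2) * (n * n) := by rw [pow_add]; ring

end Aux
/-- Lemma 5.2: for `H = K^d_{r_1,…,r_d}` there is a set `E^d(n,H)` of `O_H(n^{d-2})` edges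
of `F^d_n ∖ (K^d_{[n]} × K^d_{[d]})` such that `(K^d_{[n]} × K^d_{[d]}) ⊔ E^d(n,H)` is
weakly `H`-saturated in the complete `d`-partite `d`-graph `F^d_n` on `[n] × [d]`. -/
theorem tensor_weakly_saturated_in_partite (d : ℕ) (r : Fin d → ℕ) (hd : 2 ≤ d)
    (hr : ∀ i, 1 ≤ r i) :
    ∃ C : ℝ, ∀ n : ℕ, ∃ En : Finset (Finset (Fin n × Fin d)),
      En ⊆ multiProd n d d \ tensorG (completeQ d n) (completeQ d d) ∧
      (En.card : ℝ) ≤ C * (n : ℝ) ^ (d - 2) ∧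
      WeaklySat (multiProd n d d) (tensorG (completeQ d n) (completeQ d d) ∪ En)
        (multiSigma d d r) := by
  classical
  set M := ∑ i, r i with hM
  have hrM : ∀ i, r i ≤ M := fun i =>
    Finset.single_le_sum (fun _ _ => Nat.zero_le _) (Finset.mem_univ i)
  set R := d * M with hRdef
  refine ⟨((d * d * d * R : ℕ) : ℝ), fun n => ?_⟩
  set T := tensorG (completeQ d n) (completeQ d d) with hT
  set F := multiProd n d d with hF
  set En := (F \ T).filter (fun e => ∃ v ∈ e, (v.1 : ℕ) < R) with hEnd
  have hEnsub : En ⊆ F \ T := Finset.filter_subset _ _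
  refine ⟨En, hEnsub, ?_, ?_⟩
  · -- cardinality bound
    set A := (univ.filter (fun a : Fin d → Fin n =>
      (∃ j k, j ≠ k ∧ a j = a k) ∧ ∃ m, (a m : ℕ) < R)) with hA
    have hsub : En ⊆ A.image emb := by
      intro e he
      have he' := hEnsub he
      rw [Finset.mem_sdiff] at he'
      obtain ⟨a, rfl⟩ := exists_emb_of_mem_multiProd he'.1
      rw [hEnd, Finset.mem_filter] at he
      obtain ⟨-, v, hv, hvR⟩ := he
      refine Finset.mem_image_of_mem emb ?_
      rw [hA, Finset.mem_filter]
      refine ⟨Finset.mem_univ _, ?_, ⟨v.2, by rw [← mem_emb.mp hv]; exact hvR⟩⟩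
      have hninj : ¬ Function.Injective a := fun hinj =>
        he'.2 ((emb_mem_tensor_iff a).mpr hinj)
      obtain ⟨j, k, hjk, hne⟩ := Function.not_injective_iff.mp hninj
      exact ⟨j, k, hne, hjk⟩
    have hcard1 : En.card ≤ A.card :=
      le_trans (Finset.card_le_card hsub) (Finset.card_image_le)
    have hnat : En.card ≤ d * d * d * R * n ^ (d - 2) := by
      rcases Nat.eq_zero_or_pos n with hn0 | hnpos
      · subst hn0
        have : A.card ≤ 0 := by
          calc A.card ≤ Fintype.card (Fin d → Fin 0) := Finset.card_le_univ A
            _ = 0 := by rw [Fintype.card_fun]; simp; omega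
        omega
      · have hb := count_bound n d R
        have hsplit : n ^ d = n ^ (d - 2) * (n * n) := pow_split n d hd
        have hb2 : En.card * (n * n) ≤ (d * d * d * R * n ^ (d - 2)) * (n * n) := by
          calc En.card * (n * n) ≤ A.card * (n * n) := Nat.mul_le_mul hcard1 le_rfl
            _ ≤ d * d * d * R * n ^ d := hb
            _ = (d * d * d * R * n ^ (d - 2)) * (n * n) := by rw [hsplit]; ring
        exact Nat.le_of_mul_le_mul_right hb2 (by positivity)
    calc (En.card : ℝ) ≤ ((d * d * d * R * n ^ (d - 2) : ℕ) : ℝ) := Nat.cast_le.mpr hnat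
      _ = ((d * d * d * R : ℕ) : ℝ) * (n : ℝ) ^ (d - 2) := by push_cast; ring
  · -- weak saturation
    apply weaklySat_of_rank F (T ∪ En) (multiSigma d d r) (fun e => ∑ v ∈ e, (v.1 : ℕ))
    · exact Finset.union_subset tensor_subset_multiProd
        ((Finset.filter_subset _ _).trans (Finset.sdiff_subset))
    · intro e he
      rw [Finset.mem_sdiff] at he
      obtain ⟨heF, heG⟩ := he
      have heT : e ∉ T := fun h => heG (Finset.mem_union_left _ h)
      have heEn : e ∉ En := fun h => heG (Finset.mem_union_right _ h)
      obtain ⟨a, rfl⟩ := exists_emb_of_mem_multiProd heF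
      have hbig : ∀ j, R ≤ ((a j : ℕ)) := by
        intro j
        by_contra hj
        push_neg at hj
        exact heEn (by
          rw [hEnd, Finset.mem_filter]
          exact ⟨Finset.mem_sdiff.mpr ⟨heF, heT⟩, ⟨(a j, j), mem_emb.mpr rfl, hj⟩⟩)
      have hlt : ∀ (i : Fin d) (t : Fin (r i)), i.1 * M + ((t : ℕ) - 1) < d * M := by
        intro i t
        have h1 : (t : ℕ) - 1 < M := by
          have := hrM i
          have := t.2
          omega
        calc i.1 * M + ((t : ℕ) - 1) < i.1 * M + M := by omega
          _ = (i.1 + 1) * M := by ring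
          _ ≤ d * M := Nat.mul_le_mul_right M i.2
      have hbound : ∀ (i : Fin d) (t : Fin (r i)), i.1 * M + ((t : ℕ) - 1) < n := by
        intro i t
        calc i.1 * M + ((t : ℕ) - 1) < d * M := hlt i t
          _ ≤ (a i : ℕ) := hbig i
          _ < n := (a i).2
      set ψ : ∀ i : Fin d, Fin (r i) → Fin n := fun i t =>
        if (t : ℕ) = 0 then a i else ⟨i.1 * M + ((t : ℕ) - 1), hbound i t⟩ with hψ
      have hψ0 : ∀ i, ψ i ⟨0, hr i⟩ = a i := by
        intro i
        rw [hψ]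
        simp
      have hψle : ∀ (i : Fin d) (t : Fin (r i)), ((ψ i t : Fin n) : ℕ) ≤ (a i : ℕ) := by
        intro i t
        rw [hψ]
        dsimp only
        split_ifs with h
        · exact le_rfl
        · exact le_of_lt ((hlt i t).trans_le (hbig i))
      have hψinj : ∀ i, Function.Injective (ψ i) := by
        intro i t u h
        rw [hψ] at h
        dsimp only at h
        have ht2 := t.2
        have hu2 := u.2
        split_ifs at h with h1 h2 h2
        · exact Fin.ext (h1.trans h2.symm)
        · exfalso
          have hv := congrArg Fin.val h
          simp only at hv
          have := hlt i u
          have := hbig i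
          omega
        · exfalso
          have hv := congrArg Fin.val h
          simp only at hv
          have := hlt i t
          have := hbig i
          omega
        · have hv := congrArg Fin.val h
          simp only at hv
          exact Fin.ext (by omega)
      set φ : (Σ i : Fin d, Fin (r i)) ↪ Fin n × Fin d :=
        ⟨fun v => (ψ v.1 v.2, v.1), by
          rintro ⟨i, t⟩ ⟨k, u⟩ hik
          have h2 : i = k := congrArg Prod.snd hik
          subst h2
          have h1 : ψ i t = ψ i u := congrArg Prod.fst hik
          rw [hψinj i h1]⟩ with hφ
      have himg : ∀ s : ∀ i : Fin d, Fin (r i),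
          (sig s).image φ = emb (fun i => ψ i (s i)) := by
        intro s
        rw [sig, emb, Finset.image_image]
        rfl
      refine ⟨φ, ?_, ?_⟩
      · intro h hh
        obtain ⟨s, rfl⟩ := exists_sig_of_mem_multiSigma hh
        rw [himg]
        set x := fun i => ψ i (s i) with hx
        by_cases hxa : x = a
        · refine Finset.mem_union_right _ ?_
          rw [hxa]
          exact Finset.mem_singleton_self _
        · by_cases hGx : emb x ∈ T ∪ En
          · exact Finset.mem_union_left _ (Finset.mem_union_left _ hGx)
          · refine Finset.mem_union_left _ (Finset.mem_union_right _ ?_)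
            rw [Finset.mem_filter]
            refine ⟨Finset.mem_sdiff.mpr ⟨emb_mem_multiProd x, hGx⟩, ?_⟩
            rw [sum_emb, sum_emb]
            obtain ⟨j, hj⟩ := Function.ne_iff.mp hxa
            refine Finset.sum_lt_sum (fun i _ => hψle i (s i))
              ⟨j, Finset.mem_univ j, lt_of_le_of_ne (hψle j (s j)) (fun hv => hj (Fin.ext hv))⟩
      · refine ⟨sig (fun i => ⟨0, hr i⟩), sig_mem_multiSigma _, ?_⟩
        rw [himg]
        exact congrArg emb (funext fun i => hψ0 i)
end
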